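/- arXiv:1901.06295 — 5 statements merged into one kernel-verified Lean document; each statement's English description precedes it below -/
import Mathlib

section
/- Let c > 0 be real and k ≥ 2 an integer. Then the contour integral ∫_{c-i∞}^{c+i∞} y^s / s^k ds equals 0 if 0 ≤ y < 1, and equals (2πi/(k-1)!)·(log y)^{k-1} if y ≥ 1. -/
/-!
Let `f n = negLogPowIndicator n`, which is `(-log x) ^ n` on `(0, 1]` and `0` elsewhere.
Differentiating the Mellin transform `1 / s` of the indicator of `(0, 1]` under the integral
sign `n` times gives `𝓜 (f n) s = n! / s ^ (n + 1)` for `0 < re s`. On the line `re s = c` this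
is `O(|s|⁻²)` when `n ≥ 1`, and then `f n` is also continuous on `(0, ∞)`, so Mellin inversion at
`x = y⁻¹` gives `∫ y ^ (c + it) / (c + it) ^ (n + 1) dt = 2π f n (y⁻¹) / n!`, where `f n (y⁻¹)`
is `0` for `y < 1` and `(log y) ^ n` for `y ≥ 1`.
-/

open Complex MeasureTheory Set Filter Asymptotics Topology
open scoped Nat

noncomputable def negLogPowIndicator (n : ℕ) : ℝ → ℂ :=
  indicator (Ioc 0 1) fun t => ((-Real.log t : ℝ) : ℂ) ^ n

lemma negLogPowIndicator_zero : negLogPowIndicator 0 = indicator (Ioc 0 1) fun _ => 1 := by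
  simp [negLogPowIndicator]

lemma negLogPowIndicator_succ (n : ℕ) :
    negLogPowIndicator (n + 1) = fun t => (-Real.log t) • negLogPowIndicator n t := by
  ext t
  by_cases ht : t ∈ Ioc (0 : ℝ) 1 <;> simp [negLogPowIndicator, ht, pow_succ', real_smul]

lemma negLogPowIndicator_inv (n : ℕ) {y : ℝ} (hy : 0 < y) :
    negLogPowIndicator n y⁻¹ = if y < 1 then 0 else (Real.log y : ℂ) ^ n := by
  split_ifs with hy1
  · exact indicator_of_notMem (fun h => (one_lt_inv₀ hy).2 hy1 |>.not_ge h.2) _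
  · have hmem : y⁻¹ ∈ Ioc 0 1 := ⟨inv_pos.2 hy, inv_le_one_of_one_le₀ (not_lt.1 hy1)⟩
    rw [negLogPowIndicator, indicator_of_mem hmem, Real.log_inv, neg_neg]

lemma locallyIntegrableOn_negLogPowIndicator (n : ℕ) :
    LocallyIntegrableOn (negLogPowIndicator n) (Ioi 0) := by
  have hcont : ContinuousOn (fun t : ℝ => ((-Real.log t : ℝ) : ℂ) ^ n) (Ioi 0) := fun t ht =>
    ((continuous_ofReal.continuousAt.comp
      (Real.continuousAt_log (ne_of_gt ht)).neg).pow n).continuousWithinAt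
  rw [locallyIntegrableOn_iff isOpen_Ioi.isLocallyClosed]
  exact fun K hK hKc => ((hcont.mono hK).integrableOn_compact hKc).indicator measurableSet_Ioc

lemma negLogPowIndicator_isBigO_atTop (n : ℕ) (a : ℝ) :
    negLogPowIndicator n =O[atTop] (· ^ (-a)) := by
  refine (isBigO_zero _ _).congr' ?_ EventuallyEq.rfl
  filter_upwards [eventually_gt_atTop 1] with t ht
  exact (indicator_of_notMem (fun h => ht.not_ge h.2) _).symm

lemma negLogPowIndicator_isBigO_nhdsGT_zero (n : ℕ) {b : ℝ} (hb : 0 < b) :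
    negLogPowIndicator n =O[𝓝[>] 0] (· ^ (-b)) := by
  induction n generalizing b with
  | zero =>
    refine IsBigO.of_bound 1 ?_
    filter_upwards [self_mem_nhdsWithin] with t (ht : 0 < t)
    rw [one_mul, Real.norm_of_nonneg (Real.rpow_nonneg ht.le _), negLogPowIndicator_zero]
    by_cases ht1 : t ∈ Ioc (0 : ℝ) 1
    · simpa [ht1] using Real.one_le_rpow_of_pos_of_le_one_of_nonpos ht ht1.2 (neg_nonpos.2 hb.le)
    · simpa [ht1] using (Real.rpow_nonneg ht.le _)
  | succ n ih =>
    rw [negLogPowIndicator_succ]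
    simpa [neg_smul] using (isBigO_rpow_zero_log_smul (half_lt_self hb) (ih (half_pos hb))).neg_left

lemma hasMellin_negLogPowIndicator (n : ℕ) {s : ℂ} (hs : 0 < s.re) :
    HasMellin (negLogPowIndicator n) s (n ! / s ^ (n + 1)) := by
  induction n generalizing s with
  | zero => simpa [negLogPowIndicator_zero] using hasMellin_one_Ioc hs
  | succ n ih =>
    have hs0 : s ≠ 0 := fun h => by simp [h] at hs
    obtain ⟨hconv, hderiv⟩ := mellin_hasDerivAt_of_isBigO_rpow
      (locallyIntegrableOn_negLogPowIndicator n) (negLogPowIndicator_isBigO_atTop n (s.re + 1))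
      (lt_add_one _) (negLogPowIndicator_isBigO_nhdsGT_zero n (half_pos hs)) (half_lt_self hs)
    have hclosed : HasDerivAt (fun z : ℂ => n ! / z ^ (n + 1))
        (-((n + 1) ! / s ^ (n + 2))) s := by
      have h := ((hasDerivAt_pow (n + 1) s).inv (pow_ne_zero _ hs0)).const_mul (n ! : ℂ)
      simp only [Pi.inv_apply, ← div_eq_mul_inv] at h
      refine h.congr_deriv ?_
      rw [Nat.factorial_succ]
      push_cast
      field_simp
      ring
    have hmellin : mellin (negLogPowIndicator n) =ᶠ[𝓝 s] fun z => n ! / z ^ (n + 1) := by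
      filter_upwards [(continuous_re.isOpen_preimage _ isOpen_Ioi).mem_nhds hs] with z hz
      exact (ih hz).2
    have hmellin_log := hderiv.unique (hclosed.congr_of_eventuallyEq hmellin)
    rw [negLogPowIndicator_succ]
    have h := hasMellin_const_smul hconv (-1 : ℝ)
    simp only [neg_one_smul, hmellin_log, neg_neg] at h
    simpa [neg_smul] using h

lemma negLogPowIndicator_eventuallyEq_log_min {n : ℕ} (hn : n ≠ 0) {x : ℝ} (hx : 0 < x) :
    negLogPowIndicator n =ᶠ[𝓝 x] fun t => ((-Real.log (min t 1) : ℝ) : ℂ) ^ n := by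
  filter_upwards [Ioi_mem_nhds hx] with t (ht : 0 < t)
  rcases le_or_gt t 1 with ht1 | ht1
  · rw [negLogPowIndicator, indicator_of_mem (show t ∈ Ioc 0 1 from ⟨ht, ht1⟩), min_eq_left ht1]
  · rw [negLogPowIndicator, indicator_of_notMem (fun h => ht1.not_ge h.2), min_eq_right ht1.le]
    simp [hn]

lemma continuousAt_negLogPowIndicator {n : ℕ} (hn : n ≠ 0) {x : ℝ} (hx : 0 < x) :
    ContinuousAt (negLogPowIndicator n) x := by
  refine ContinuousAt.congr ?_ (negLogPowIndicator_eventuallyEq_log_min hn hx).symm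
  have hlog : ContinuousAt (fun t => Real.log (min t 1)) x :=
    (continuousAt_id.min continuousAt_const).log (lt_min hx one_pos).ne'
  exact (continuous_ofReal.continuousAt.comp hlog.neg).pow n

lemma ofReal_add_mul_I_ne_zero {c : ℝ} (hc : c ≠ 0) (t : ℝ) : (c : ℂ) + t * I ≠ 0 :=
  fun h => hc (by simpa using congrArg re h)

lemma integrable_inv_ofReal_add_mul_I_pow {c : ℝ} (hc : c ≠ 0) {k : ℕ} (hk : 2 ≤ k) :
    Integrable fun t : ℝ => (((c : ℂ) + t * I) ^ k)⁻¹ := by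
  have hcont : Continuous fun t : ℝ => (((c : ℂ) + t * I) ^ k)⁻¹ :=
    (by fun_prop : Continuous fun t : ℝ => ((c : ℂ) + t * I) ^ k).inv₀
      fun t => pow_ne_zero _ (ofReal_add_mul_I_ne_zero hc t)
  have hm : 0 < min (c ^ 2) 1 := lt_min (by positivity) one_pos
  refine (integrable_inv_one_add_sq.const_mul (|c| ^ (k - 2) * min (c ^ 2) 1)⁻¹).mono'
    hcont.aestronglyMeasurable (ae_of_all _ fun t => ?_)
  set z : ℂ := c + t * I
  have hz : |c| ≤ ‖z‖ := by simpa [z] using abs_re_le_norm z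
  have hz2 : min (c ^ 2) 1 * (1 + t ^ 2) ≤ ‖z‖ ^ 2 := by
    rw [Complex.sq_norm, Complex.normSq_add_mul_I]
    rcases le_total (c ^ 2) 1 with h | h
    · rw [min_eq_left h]; nlinarith [sq_nonneg t]
    · rw [min_eq_right h]; nlinarith
  have hzk : |c| ^ (k - 2) * (min (c ^ 2) 1 * (1 + t ^ 2)) ≤ ‖z‖ ^ k := by
    rw [show k = k - 2 + 2 by omega, pow_add, Nat.add_sub_cancel]
    exact mul_le_mul (pow_le_pow_left₀ (abs_nonneg c) hz _) hz2 (by positivity) (by positivity)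
  calc ‖(z ^ k)⁻¹‖ = (‖z‖ ^ k)⁻¹ := by rw [norm_inv, norm_pow]
    _ ≤ (|c| ^ (k - 2) * (min (c ^ 2) 1 * (1 + t ^ 2)))⁻¹ :=
        inv_anti₀ (by have := abs_pos.2 hc; positivity) hzk
    _ = (|c| ^ (k - 2) * min (c ^ 2) 1)⁻¹ * (1 + t ^ 2)⁻¹ := by rw [← mul_assoc, mul_inv]

lemma integrable_cpow_div_ofReal_add_mul_I_pow {c : ℝ} (hc : c ≠ 0) {k : ℕ} (hk : 2 ≤ k)
    {y : ℝ} (hy : 0 < y) :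
    Integrable fun t : ℝ => (y : ℂ) ^ ((c : ℂ) + t * I) / ((c : ℂ) + t * I) ^ k := by
  have hcpow : Continuous fun t : ℝ => (y : ℂ) ^ ((c : ℂ) + t * I) :=
    (by fun_prop : Continuous fun t : ℝ => (c : ℂ) + t * I).const_cpow
      (Or.inl (ofReal_ne_zero.2 hy.ne'))
  simpa only [div_eq_mul_inv] using (integrable_inv_ofReal_add_mul_I_pow hc hk).bdd_mul
    hcpow.aestronglyMeasurable (c := y ^ c) (ae_of_all _ fun t => by
      simp [Complex.norm_cpow_eq_rpow_re_of_pos hy])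

lemma integral_cpow_div_ofReal_add_mul_I_pow {c : ℝ} (hc : 0 < c) {n : ℕ} (hn : n ≠ 0)
    {y : ℝ} (hy : 0 < y) :
    ∫ t : ℝ, (y : ℂ) ^ ((c : ℂ) + t * I) / ((c : ℂ) + t * I) ^ (n + 1) =
      2 * Real.pi / n ! * negLogPowIndicator n y⁻¹ := by
  have hmellin (t : ℝ) : mellin (negLogPowIndicator n) (c + t * I) = n ! / (c + t * I) ^ (n + 1) :=
    (hasMellin_negLogPowIndicator n (by simpa using hc)).2
  have hvert : VerticalIntegrable (mellin (negLogPowIndicator n)) c := by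
    unfold VerticalIntegrable
    simpa only [hmellin, div_eq_mul_inv] using
      (integrable_inv_ofReal_add_mul_I_pow hc.ne' (by omega : 2 ≤ n + 1)).const_mul (n ! : ℂ)
  have hinv := mellinInv_mellin_eq c _ (inv_pos.2 hy)
    (hasMellin_negLogPowIndicator n (by simpa using hc)).1 hvert
    (continuousAt_negLogPowIndicator hn (inv_pos.2 hy))
  rw [← hinv, mellinInv]
  simp only [hmellin, ofReal_inv, inv_cpow_ofReal_nonneg hy.le, cpow_neg, inv_inv, smul_eq_mul]
  simp only [mul_div_left_comm _ (n ! : ℂ), integral_const_mul, real_smul]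
  generalize ∫ t : ℝ, (y : ℂ) ^ ((c : ℂ) + t * I) / ((c : ℂ) + t * I) ^ (n + 1) = J
  have hπ : (Real.pi : ℂ) ≠ 0 := ofReal_ne_zero.2 Real.pi_ne_zero
  have hfac : (n ! : ℂ) ≠ 0 := Nat.cast_ne_zero.2 n.factorial_ne_zero
  push_cast
  field_simp

/-- The vertical line integral `∫_{c-i∞}^{c+i∞} y^s / s^k ds` equals `0` if `0 ≤ y < 1`
and `(2πi/(k-1)!)·(log y)^{k-1}` if `y ≥ 1`. -/
theorem vertical_line_integral_ys_div_sk (c : ℝ) (hc : 0 < c) (k : ℕ) (hk : 2 ≤ k)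
    (y : ℝ) (hy : 0 ≤ y) :
    Filter.Tendsto
      (fun T : ℝ => Complex.I * ∫ t in (-T)..T,
        (y : ℂ) ^ ((c : ℂ) + (t : ℂ) * Complex.I) / ((c : ℂ) + (t : ℂ) * Complex.I) ^ k)
      Filter.atTop
      (nhds (if y < 1 then 0
        else 2 * Real.pi * Complex.I / (Nat.factorial (k - 1)) * (Real.log y) ^ (k - 1))) := by
  rcases hy.eq_or_lt with rfl | hy
  · simp [zero_cpow (ofReal_add_mul_I_ne_zero hc.ne' _)]
  obtain ⟨n, rfl⟩ : ∃ n, k = n + 1 := ⟨k - 1, by omega⟩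
  have hlim := (intervalIntegral_tendsto_integral
    (integrable_cpow_div_ofReal_add_mul_I_pow hc.ne' hk hy) tendsto_neg_atTop_atBot
    tendsto_id).const_mul I
  rw [integral_cpow_div_ofReal_add_mul_I_pow hc (by omega) hy, negLogPowIndicator_inv n hy] at hlim
  convert hlim using 2
  · rfl
  split_ifs <;> simp only [Nat.add_sub_cancel, mul_zero]
  ring
end

section
/- There is an absolute constant C such that for every positive integer x and every monic polynomial in F_q[T], ∑_{N monic, deg N ≤ x} 1/φ(N) ≤ C·x. -/
open Polynomial
open scoped Classical

/-- The Euler totient on `F_q[T]`. -/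
noncomputable def ffPhi {Fq : Type*} [Field Fq] (R : Polynomial Fq) : ℕ :=
  if R.natDegree = 0 then 1
  else Nat.card {A : Polynomial Fq // A.degree < R.degree ∧ IsCoprime A R}

/-!
Write `|N| = q ^ deg N` (this is `cardPowDegree N`). By the Chinese remainder theorem `φ` is
multiplicative, and `φ(P ^ (i + 1)) = |P| ^ (i + 1) - |P| ^ i`, so
`1 / φ(N) = |N|⁻¹ ∏_{P ∣ N} (1 + 1 / (|P| - 1))`. Expanding the product over the sets `S` of prime
factors of `N` and exchanging the sums, a set `S` contributes `∏_{P ∈ S} 1 / (|P| - 1)` times the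
sum of `|N|⁻¹` over the monic multiples `N` of `∏ S` of degree `≤ x`, which is at most
`(x + 1) / |∏ S|` because there are at most `q ^ n` monic polynomials of degree `n`. Hence the
whole sum is at most `(x + 1) ∏_{deg P ≤ x} (1 + 1 / (|P| (|P| - 1))) ≤ (x + 1) e ^ 4`, the last
step because `∑_P 1 / (|P| (|P| - 1)) ≤ ∑_n 1 / (q ^ n - 1) ≤ 4`.
-/

open UniqueFactorizationMonoid

theorem Ideal.Quotient.isUnit_mk_span_singleton_iff {R : Type*} [CommRing R] {a b : R} :
    IsUnit (Ideal.Quotient.mk (Ideal.span {b}) a) ↔ IsCoprime a b := by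
  simp only [isUnit_iff_exists_inv, Ideal.Quotient.mk_surjective.exists, ← map_mul,
    ← map_one (Ideal.Quotient.mk (Ideal.span {b})), Ideal.Quotient.eq, Ideal.mem_span_singleton]
  constructor
  · rintro ⟨c, d, hd⟩
    exact ⟨c, -d, by linear_combination hd⟩
  · rintro ⟨u, v, h⟩
    exact ⟨u, -v, by linear_combination h⟩

namespace Polynomial

variable {K : Type*} [Field K]

theorem bijective_mk_span_singleton_degree_lt {N : K[X]} (hN : N ≠ 0) :
    Function.Bijective fun A : {A : K[X] // A.degree < N.degree} =>
      Ideal.Quotient.mk (Ideal.span {N}) A.1 := by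
  constructor
  · rintro ⟨A, hA⟩ ⟨B, hB⟩ h
    rw [Ideal.Quotient.eq, Ideal.mem_span_singleton] at h
    exact Subtype.ext (sub_eq_zero.1 <| eq_zero_of_dvd_of_degree_lt h <|
      (degree_sub_le A B).trans_lt (max_lt hA hB))
  · refine Ideal.Quotient.mk_surjective.forall.2 fun A => ⟨⟨A % N, degree_mod_lt A hN⟩, ?_⟩
    rw [Ideal.Quotient.eq, Ideal.mem_span_singleton]
    exact ⟨-(A / N), by simp only [EuclideanDomain.mod_eq_sub_mul_div]; ring⟩

variable (K) in
noncomputable def subtypeDegreeLTEquiv (n : ℕ) :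
    {A : K[X] // A.degree < n} ≃ (Fin n → K) :=
  (Equiv.subtypeEquivRight fun _ => mem_degreeLT.symm).trans (degreeLTEquiv K n).toEquiv

theorem monic_of_mem_primeFactors {N P : K[X]} (hP : P ∈ primeFactors N) : P.Monic := by
  rw [mem_primeFactors] at hP
  rw [← normalize_normalized_factor P hP]
  exact monic_normalize (irreducible_of_normalized_factor P hP).ne_zero

theorem prod_dvd_of_subset_primeFactors {N : K[X]} {S : Finset K[X]}
    (hS : S ⊆ primeFactors N) : ∏ P ∈ S, P ∣ N :=
  (Finset.prod_dvd_prod_of_subset S _ id hS).trans radical_dvd_self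

variable [Fintype K]

instance finite_degree_lt (n : ℕ) : Finite {A : K[X] // A.degree < n} :=
  .of_equiv _ (subtypeDegreeLTEquiv K n).symm

theorem card_degree_lt (n : ℕ) :
    Nat.card {A : K[X] // A.degree < n} = Fintype.card K ^ n := by
  rw [Nat.card_congr (subtypeDegreeLTEquiv K n), Nat.card_fun, Nat.card_eq_fintype_card,
    Nat.card_fin]

theorem card_multiples_degree_lt {p : K[X]} (hp : p ≠ 0) (n : ℕ) :
    Nat.card {A : K[X] // A.degree < ↑(n + p.natDegree) ∧ p ∣ A} = Fintype.card K ^ n := by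
  have hdeg (B : K[X]) : (p * B).degree < ↑(n + p.natDegree) ↔ B.degree < n := by
    rw [degree_mul, degree_eq_natDegree hp, Nat.cast_add, add_comm (n : WithBot ℕ),
      WithBot.add_lt_add_iff_left (WithBot.natCast_ne_bot _)]
  rw [← card_degree_lt n]
  refine (Nat.card_congr (Equiv.ofBijective
    (fun B => ⟨p * B.1, (hdeg B).2 B.2, dvd_mul_right _ _⟩)
    ⟨fun B C h => Subtype.ext (mul_left_cancel₀ hp (congrArg Subtype.val h)), ?_⟩)).symm
  rintro ⟨_, hA, B, rfl⟩
  exact ⟨⟨B, (hdeg B).1 hA⟩, rfl⟩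

theorem one_lt_cardPowDegree {P : K[X]} (hP : 0 < P.natDegree) :
    (1 : ℝ) < cardPowDegree P := by
  rw [cardPowDegree_nonzero _ (ne_zero_of_natDegree_gt hP)]
  exact_mod_cast one_lt_pow₀ (mod_cast Fintype.one_lt_card) hP.ne'

theorem prod_inv_cardPowDegree_sub_one_nonneg {S : Finset K[X]} (hS : ∀ P ∈ S, Irreducible P) :
    0 ≤ ∏ P ∈ S, ((cardPowDegree P : ℝ) - 1)⁻¹ :=
  Finset.prod_nonneg fun P hP =>
    inv_nonneg.2 <| sub_nonneg.2 (one_lt_cardPowDegree (hS P hP).natDegree_pos).le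

theorem Monic.cardPowDegree_eq {N : K[X]} (hN : N.Monic) :
    (cardPowDegree N : ℝ) = (Fintype.card K : ℝ) ^ N.natDegree := by
  rw [cardPowDegree_nonzero _ hN.ne_zero, Int.cast_pow, Int.cast_natCast]

theorem finite_setOf_monic_natDegree_le (x : ℕ) :
    {N : K[X] | N.Monic ∧ N.natDegree ≤ x}.Finite :=
  Set.Finite.subset (s := {N : K[X] | N.degree < ↑(x + 1)}) (finite_degree_lt (x + 1)) fun N hN =>
    degree_le_natDegree.trans_lt (by exact_mod_cast Nat.lt_succ_of_le hN.2)

variable (K) in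
noncomputable def monicsDegreeLE (x : ℕ) : Finset K[X] :=
  (finite_setOf_monic_natDegree_le x).toFinset

theorem mem_monicsDegreeLE {x : ℕ} {N : K[X]} :
    N ∈ monicsDegreeLE K x ↔ N.Monic ∧ N.natDegree ≤ x :=
  Set.Finite.mem_toFinset _

theorem primeFactors_subset_filter_irreducible {x : ℕ} {N : K[X]}
    (hN : N ∈ monicsDegreeLE K x) : primeFactors N ⊆ (monicsDegreeLE K x).filter Irreducible := by
  intro P hP
  obtain ⟨hNm, hNx⟩ := mem_monicsDegreeLE.1 hN
  have hPN := dvd_of_mem_normalizedFactors (mem_primeFactors.1 hP)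
  exact Finset.mem_filter.2 ⟨mem_monicsDegreeLE.2 ⟨monic_of_mem_primeFactors hP,
    (natDegree_le_of_dvd hPN hNm.ne_zero).trans hNx⟩,
    irreducible_of_normalized_factor P (mem_primeFactors.1 hP)⟩

theorem card_filter_natDegree_eq_le {s : Finset K[X]} (hs : ∀ N ∈ s, N.Monic) (n : ℕ) :
    (s.filter (·.natDegree = n)).card ≤ Fintype.card K ^ n := by
  have hinj : Set.InjOn (fun N : K[X] => fun i : Fin n => N.coeff i)
      (s.filter (·.natDegree = n)) := by
    intro N hN M hM h
    obtain ⟨hNs, hNn⟩ := Finset.mem_filter.1 hN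
    obtain ⟨hMs, hMn⟩ := Finset.mem_filter.1 hM
    have hN0 := (hs N hNs).ne_zero
    have hNM : (N - M).degree < n := by
      rw [← hNn, ← degree_eq_natDegree hN0]
      refine degree_sub_lt_left ?_ hN0 (by rw [(hs N hNs).leadingCoeff, (hs M hMs).leadingCoeff])
      rw [degree_eq_natDegree hN0, degree_eq_natDegree (hs M hMs).ne_zero, hNn, hMn]
    refine sub_eq_zero.1 (ext fun k => ?_)
    rcases lt_or_ge k n with hk | hk
    · simpa [sub_eq_zero] using congrFun h ⟨k, hk⟩
    · exact coeff_eq_zero_of_degree_lt (hNM.trans_le (by exact_mod_cast hk))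
  calc (s.filter (·.natDegree = n)).card ≤ (Finset.univ : Finset (Fin n → K)).card :=
        Finset.card_le_card_of_injOn _ (fun _ _ => Finset.mem_univ _) hinj
    _ = Fintype.card K ^ n := by simp

theorem sum_le_sum_range_card_pow_mul {s : Finset K[X]} {x : ℕ}
    (hs : ∀ N ∈ s, N.Monic ∧ N.natDegree ≤ x) (w : ℕ → ℝ) (hw : ∀ n, 0 ≤ w n) :
    ∑ N ∈ s, w N.natDegree ≤ ∑ n ∈ Finset.range (x + 1), (Fintype.card K : ℝ) ^ n * w n := by
  rw [← Finset.sum_fiberwise_of_maps_to (g := natDegree) (t := Finset.range (x + 1))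
    fun N hN => Finset.mem_range.2 (Nat.lt_succ_of_le (hs N hN).2)]
  refine Finset.sum_le_sum fun n _ => ?_
  rw [Finset.sum_congr rfl fun N hN => congrArg w (Finset.mem_filter.1 hN).2, Finset.sum_const,
    nsmul_eq_mul]
  gcongr
  · exact hw n
  · exact_mod_cast card_filter_natDegree_eq_le (fun N hN => (hs N hN).1) n

theorem sum_inv_cardPowDegree_le (x : ℕ) :
    ∑ N ∈ monicsDegreeLE K x, (cardPowDegree N : ℝ)⁻¹ ≤ x + 1 := by
  have hs (N) (hN : N ∈ monicsDegreeLE K x) := mem_monicsDegreeLE.1 hN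
  calc ∑ N ∈ monicsDegreeLE K x, (cardPowDegree N : ℝ)⁻¹
      = ∑ N ∈ monicsDegreeLE K x, ((Fintype.card K : ℝ) ^ N.natDegree)⁻¹ :=
        Finset.sum_congr rfl fun N hN => by rw [(hs N hN).1.cardPowDegree_eq]
    _ ≤ ∑ n ∈ Finset.range (x + 1), (Fintype.card K : ℝ) ^ n * ((Fintype.card K : ℝ) ^ n)⁻¹ :=
        sum_le_sum_range_card_pow_mul hs (fun n => ((Fintype.card K : ℝ) ^ n)⁻¹) fun n => by
          positivity
    _ = x + 1 := by simp

theorem sum_inv_cardPowDegree_dvd_le {D : K[X]} (hD : D.Monic) (x : ℕ) :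
    ∑ N ∈ (monicsDegreeLE K x).filter (D ∣ ·), (cardPowDegree N : ℝ)⁻¹ ≤
      (cardPowDegree D : ℝ)⁻¹ * (x + 1) := by
  have hsub : (monicsDegreeLE K x).filter (D ∣ ·) ⊆ (monicsDegreeLE K x).image (D * ·) := by
    intro N hN
    obtain ⟨hNx, M, rfl⟩ := Finset.mem_filter.1 hN
    obtain ⟨hDM, hdeg⟩ := mem_monicsDegreeLE.1 hNx
    exact Finset.mem_image_of_mem _ (mem_monicsDegreeLE.2 ⟨hD.of_mul_monic_left hDM,
      (natDegree_le_of_dvd (dvd_mul_left M D) hDM.ne_zero).trans hdeg⟩)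
  calc _ ≤ ∑ N ∈ (monicsDegreeLE K x).image (D * ·), (cardPowDegree N : ℝ)⁻¹ :=
        Finset.sum_le_sum_of_subset_of_nonneg hsub fun _ _ _ => by positivity
    _ = (cardPowDegree D : ℝ)⁻¹ * ∑ M ∈ monicsDegreeLE K x, (cardPowDegree M : ℝ)⁻¹ := by
        rw [Finset.sum_image fun _ _ _ _ h => mul_left_cancel₀ hD.ne_zero h, Finset.mul_sum]
        simp [mul_comm]
    _ ≤ _ := by gcongr; exact sum_inv_cardPowDegree_le x

theorem sum_inv_irreducible_le (x : ℕ) :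
    ∑ P ∈ (monicsDegreeLE K x).filter Irreducible,
      ((cardPowDegree P : ℝ) * (cardPowDegree P - 1))⁻¹ ≤ 4 := by
  have hq : (2 : ℝ) ≤ Fintype.card K := mod_cast (Fintype.one_lt_card : 1 < Fintype.card K)
  set q : ℝ := (Fintype.card K : ℝ)
  have hs (P) (hP : P ∈ (monicsDegreeLE K x).filter Irreducible) :=
    mem_monicsDegreeLE.1 (Finset.mem_filter.1 hP).1
  have hterm (n : ℕ) : q ^ n * (q ^ n * (q ^ n - 1))⁻¹ ≤ 2 * (1 / 2) ^ n := by
    rcases n.eq_zero_or_pos with rfl | hn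
    · simp -- the `n = 0` term is `1 * (1 * 0)⁻¹ = 0`
    have h2n : 2 ^ n ≤ q ^ n := pow_le_pow_left₀ zero_le_two hq n
    have h2 : (2 : ℝ) ≤ 2 ^ n := le_self_pow₀ one_le_two hn.ne'
    rw [mul_inv, mul_inv_cancel_left₀ (by positivity), one_div, inv_pow, ← div_eq_mul_inv,
      le_div_iff₀ (by positivity), inv_mul_le_iff₀ (by linarith)]
    linarith
  calc _ = ∑ P ∈ (monicsDegreeLE K x).filter Irreducible,
        (q ^ P.natDegree * (q ^ P.natDegree - 1))⁻¹ :=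
        Finset.sum_congr rfl fun P hP => by rw [(hs P hP).1.cardPowDegree_eq]
    _ ≤ ∑ n ∈ Finset.range (x + 1), q ^ n * (q ^ n * (q ^ n - 1))⁻¹ :=
        sum_le_sum_range_card_pow_mul hs (fun n => (q ^ n * (q ^ n - 1))⁻¹) fun n =>
          inv_nonneg.2 (mul_nonneg (by positivity) (sub_nonneg.2 (one_le_pow₀ (by linarith))))
    _ ≤ ∑ n ∈ Finset.range (x + 1), 2 * (1 / 2) ^ n := Finset.sum_le_sum fun n _ => hterm n
    _ ≤ 4 := by
        rw [← Finset.mul_sum]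
        linarith [sum_geometric_two_le (x + 1)]

end Polynomial

section Totient

variable {K : Type*} [Field K]

theorem ffPhi_eq_card_units {N : K[X]} (hN : N ≠ 0) :
    ffPhi N = Nat.card (K[X] ⧸ Ideal.span {N})ˣ := by
  unfold ffPhi
  split_ifs with hdeg
  · have hunit : IsUnit N :=
      isUnit_iff_degree_eq_zero.2 (by rw [degree_eq_natDegree hN, hdeg]; rfl)
    have := Ideal.Quotient.subsingleton_iff.2 (Ideal.span_singleton_eq_top.2 hunit)
    exact Nat.card_unique.symm
  · exact Nat.card_congr <| (Equiv.subtypeSubtypeEquivSubtypeInter _ _).symm.trans <|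
      (Equiv.subtypeEquiv (Equiv.ofBijective _ (bijective_mk_span_singleton_degree_lt hN))
        fun _ => Ideal.Quotient.isUnit_mk_span_singleton_iff.symm).trans
      Submonoid.unitsTypeEquivIsUnitSubmonoid.toEquiv.symm

theorem ffPhi_mul {M N : K[X]} (hM : M ≠ 0) (hN : N ≠ 0) (h : IsCoprime M N) :
    ffPhi (M * N) = ffPhi M * ffPhi N := by
  rw [ffPhi_eq_card_units hM, ffPhi_eq_card_units hN, ffPhi_eq_card_units (mul_ne_zero hM hN),
    ← Nat.card_prod]
  refine Nat.card_congr (Units.mapEquiv ?_ |>.trans MulEquiv.prodUnits).toEquiv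
  exact ((Ideal.quotEquivOfEq (Ideal.span_singleton_mul_span_singleton M N).symm).trans
    (Ideal.quotientMulEquivQuotientProd _ _
      ((Ideal.isCoprime_span_singleton_iff M N).2 h))).toMulEquiv

variable [Fintype K]

theorem ffPhi_pow_succ_add {p : K[X]} (hp : Irreducible p) (i : ℕ) :
    ffPhi (p ^ (i + 1)) + Fintype.card K ^ (i * p.natDegree) =
      Fintype.card K ^ ((i + 1) * p.natDegree) := by
  have hp0 : p ≠ 0 := hp.ne_zero
  set n := i * p.natDegree + p.natDegree
  have hdeg : (p ^ (i + 1)).natDegree = n := by rw [natDegree_pow]; ring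
  have hcop (A : K[X]) : IsCoprime A (p ^ (i + 1)) ↔ ¬ p ∣ A := by
    rw [IsCoprime.pow_right_iff i.succ_pos, isCoprime_comm, hp.coprime_iff_not_dvd]
  -- residues of degree `< n` are either multiples of `p` or coprime to `p ^ (i + 1)`
  rw [ffPhi, if_neg (by rw [hdeg]; exact (Nat.add_pos_right _ hp.natDegree_pos).ne'),
    degree_eq_natDegree (pow_ne_zero _ hp0), hdeg, ← card_multiples_degree_lt hp0,
    show (i + 1) * p.natDegree = n by ring, ← card_degree_lt,
    ← Nat.card_congr (Equiv.sumCompl fun A : {A : K[X] // A.degree < n} => p ∣ A.1),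
    Nat.card_sum, add_comm]
  congr 1
  · exact Nat.card_congr (Equiv.subtypeSubtypeEquivSubtypeInter _ _).symm
  · exact Nat.card_congr ((Equiv.subtypeEquivRight fun A => and_congr_right' (hcop A)).trans
      (Equiv.subtypeSubtypeEquivSubtypeInter _ _).symm)

theorem ffPhi_eq_mul_prod {N : K[X]} (hN : N ≠ 0) :
    (ffPhi N : ℝ) = cardPowDegree N * ∏ P ∈ primeFactors N, (1 - (cardPowDegree P : ℝ)⁻¹) := by
  have hunit {u : K[X]} (hu : IsUnit u) :
      (ffPhi u : ℝ) = cardPowDegree u * ∏ P ∈ primeFactors u, (1 - (cardPowDegree P : ℝ)⁻¹) := by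
    simp [ffPhi, natDegree_eq_zero_of_isUnit hu, cardPowDegree_nonzero _ hu.ne_zero,
      primeFactors_of_isUnit hu]
  induction N using induction_on_coprime with
  | h0 => exact absurd rfl hN
  | h1 hu => exact hunit hu
  | @hpr p i hp =>
    obtain _ | i := i
    · exact hunit (by simp)
    have hprime : primeFactors (p ^ (i + 1)) = {normalize p} := by
      simp [primeFactors, normalizedFactors_irreducible hp.irreducible]
    have hnorm : (normalize p).natDegree = p.natDegree :=
      natDegree_eq_of_degree_eq degree_normalize
    have hphi := ffPhi_pow_succ_add hp.irreducible i
    rw [hprime, Finset.prod_singleton, map_pow, cardPowDegree_nonzero _ hp.ne_zero,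
      cardPowDegree_nonzero _ (by simpa using hp.ne_zero), hnorm]
    rw [← Nat.cast_inj (R := ℝ), pow_mul', pow_mul'] at hphi
    push_cast at hphi ⊢
    have hQ : (Fintype.card K : ℝ) ^ p.natDegree ≠ 0 := by positivity
    rw [mul_one_sub, pow_succ ((Fintype.card K : ℝ) ^ p.natDegree), mul_inv_cancel_right₀ hQ]
    linear_combination hphi
  | @hcp x y hxy hx hy =>
    have hx0 : x ≠ 0 := left_ne_zero_of_mul hN
    have hy0 : y ≠ 0 := right_ne_zero_of_mul hN
    rw [ffPhi_mul hx0 hy0 hxy.isCoprime, primeFactors_mul_eq_disjUnion hxy, Finset.prod_disjUnion,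
      map_mul, Nat.cast_mul, hx hx0, hy hy0]
    push_cast
    ring

theorem one_div_ffPhi_eq {N : K[X]} (hN : N ≠ 0) :
    1 / (ffPhi N : ℝ) = (cardPowDegree N : ℝ)⁻¹ *
      ∑ S ∈ (primeFactors N).powerset, ∏ P ∈ S, ((cardPowDegree P : ℝ) - 1)⁻¹ := by
  rw [ffPhi_eq_mul_prod hN, ← Finset.prod_one_add, one_div, mul_inv, ← Finset.prod_inv_distrib]
  congr 1
  refine Finset.prod_congr rfl fun P hP => ?_
  have h1 := one_lt_cardPowDegree
    (irreducible_of_normalized_factor P (mem_primeFactors.1 hP)).natDegree_pos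
  have h2 : (cardPowDegree P : ℝ) - 1 ≠ 0 := by linarith
  field_simp
  ring

theorem one_div_ffPhi_le {N : K[X]} (hN : N ≠ 0) {T : Finset K[X]}
    (hT : ∀ P ∈ T, Irreducible P) (hNT : primeFactors N ⊆ T) :
    1 / (ffPhi N : ℝ) ≤ ∑ S ∈ T.powerset.filter (fun S => ∏ P ∈ S, P ∣ N),
      (cardPowDegree N : ℝ)⁻¹ * ∏ P ∈ S, ((cardPowDegree P : ℝ) - 1)⁻¹ := by
  rw [one_div_ffPhi_eq hN, Finset.mul_sum]
  refine Finset.sum_le_sum_of_subset_of_nonneg (fun S hS => ?_) fun S hS _ => ?_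
  · rw [Finset.mem_powerset] at hS
    exact Finset.mem_filter.2
      ⟨Finset.mem_powerset.2 (hS.trans hNT), prod_dvd_of_subset_primeFactors hS⟩
  · refine mul_nonneg (by positivity) (prod_inv_cardPowDegree_sub_one_nonneg fun P hP => ?_)
    exact hT P (Finset.mem_powerset.1 (Finset.mem_filter.1 hS).1 hP)

theorem sum_one_div_ffPhi_le (x : ℕ) :
    ∑ N ∈ monicsDegreeLE K x, 1 / (ffPhi N : ℝ) ≤ (x + 1) *
      ∏ P ∈ (monicsDegreeLE K x).filter Irreducible,
        (1 + ((cardPowDegree P : ℝ) * (cardPowDegree P - 1))⁻¹) := by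
  set F := monicsDegreeLE K x
  set Pr := F.filter Irreducible
  have hPr (P) (hP : P ∈ Pr) : Irreducible P := (Finset.mem_filter.1 hP).2
  calc ∑ N ∈ F, 1 / (ffPhi N : ℝ)
      ≤ ∑ N ∈ F, ∑ S ∈ Pr.powerset.filter (fun S => ∏ P ∈ S, P ∣ N),
          (cardPowDegree N : ℝ)⁻¹ * ∏ P ∈ S, ((cardPowDegree P : ℝ) - 1)⁻¹ := by
        refine Finset.sum_le_sum fun N hN => one_div_ffPhi_le (mem_monicsDegreeLE.1 hN).1.ne_zero
          hPr (primeFactors_subset_filter_irreducible hN)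
    _ = ∑ S ∈ Pr.powerset,
          (∑ N ∈ F.filter (fun N => ∏ P ∈ S, P ∣ N), (cardPowDegree N : ℝ)⁻¹) *
            ∏ P ∈ S, ((cardPowDegree P : ℝ) - 1)⁻¹ := by
        rw [Finset.sum_comm' (t' := Pr.powerset) (s' := fun S => F.filter fun N => ∏ P ∈ S, P ∣ N)
          fun N S => by simp only [Finset.mem_filter]; tauto]
        simp only [Finset.sum_mul]
    _ ≤ ∑ S ∈ Pr.powerset, (cardPowDegree (∏ P ∈ S, P) : ℝ)⁻¹ * (x + 1) *
          ∏ P ∈ S, ((cardPowDegree P : ℝ) - 1)⁻¹ := by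
        refine Finset.sum_le_sum fun S hS => mul_le_mul_of_nonneg_right ?_
          (prod_inv_cardPowDegree_sub_one_nonneg fun P hP => hPr P (Finset.mem_powerset.1 hS hP))
        refine sum_inv_cardPowDegree_dvd_le (monic_prod_of_monic _ _ fun P hP => ?_) x
        exact (mem_monicsDegreeLE.1 (Finset.mem_filter.1 (Finset.mem_powerset.1 hS hP)).1).1
    _ = _ := by
        rw [Finset.prod_one_add, Finset.mul_sum]
        refine Finset.sum_congr rfl fun S _ => ?_
        simp only [map_prod, Int.cast_prod, ← Finset.prod_inv_distrib, mul_inv,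
          Finset.prod_mul_distrib]
        ring

end Totient

/-- There is an absolute constant `C` with `∑_{N monic, deg N ≤ x} 1/φ(N) ≤ C·x`. -/
theorem sum_inv_phi_bound :
    ∃ C : ℝ, 0 < C ∧ ∀ (Fq : Type) [Field Fq] [Fintype Fq] (x : ℕ), 1 ≤ x →
      ∑ᶠ (N : Polynomial Fq) (_ : N.Monic ∧ N.natDegree ≤ x), (1 : ℝ) / ffPhi N
        ≤ C * x := by
  refine ⟨2 * Real.exp 4, by positivity, fun Fq _ _ x hx => ?_⟩
  have hprod : ∏ P ∈ (monicsDegreeLE Fq x).filter Irreducible,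
      (1 + ((cardPowDegree P : ℝ) * (cardPowDegree P - 1))⁻¹) ≤ Real.exp 4 := by
    refine (Real.prod_one_add_le_exp_sum _ fun P => inv_nonneg.2 ?_).trans
      (Real.exp_le_exp.2 (sum_inv_irreducible_le x))
    -- needed for every `P`, also for `P = 0`, where `cardPowDegree P = 0`
    exact_mod_cast (by nlinarith [Int.le_self_sq (cardPowDegree P)] :
      (0 : ℤ) ≤ cardPowDegree P * (cardPowDegree P - 1))
  calc ∑ᶠ (N : Polynomial Fq) (_ : N.Monic ∧ N.natDegree ≤ x), (1 : ℝ) / ffPhi N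
      = ∑ N ∈ monicsDegreeLE Fq x, 1 / (ffPhi N : ℝ) := finsum_mem_eq_finite_toFinset_sum _ _
    _ ≤ (x + 1) * Real.exp 4 := (sum_one_div_ffPhi_le x).trans (by gcongr)
    _ ≤ 2 * Real.exp 4 * x := by nlinarith [Real.exp_pos 4, (mod_cast hx : (1 : ℝ) ≤ x)]
end

section
/- For every monic polynomial R in F_q[T] with ω(R) ≥ 2, ∑_{P|R} (deg P)/(|P| - 1) = O(log ω(R)), where the sum is over distinct monic prime divisors of R and the implied constant is absolute (independent of q and R). -/
open Polynomial UniqueFactorizationMonoid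
open scoped Classical

/-- `ω(R)`: the number of distinct monic prime divisors of `R`. -/
noncomputable def ffOmega {Fq : Type*} [Field Fq] (N : Polynomial Fq) : ℕ :=
  (normalizedFactors N).toFinset.card

section Aux

variable {Fq : Type} [Field Fq] [Fintype Fq]

/-- A monic irreducible polynomial of degree `n` over `F_q` divides `X^(q^n) - X`. -/
lemma aux_irr_dvd {P : Polynomial Fq} (hm : P.Monic) (hirr : Irreducible P) :
    P ∣ (X ^ (Fintype.card Fq ^ P.natDegree) - X : Polynomial Fq) := by
  have hfact : Fact (Irreducible P) := ⟨hirr⟩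
  have hP0 : P ≠ 0 := hm.ne_zero
  let pb := AdjoinRoot.powerBasis hP0
  have hfd : Module.Finite Fq (AdjoinRoot P) := Module.Finite.of_basis pb.basis
  have hfin : Finite (AdjoinRoot P) := Module.finite_of_finite Fq
  have : Fintype (AdjoinRoot P) := Fintype.ofFinite _
  have hcard : Fintype.card (AdjoinRoot P) = Fintype.card Fq ^ P.natDegree := by
    rw [Module.card_eq_pow_finrank (K := Fq) (V := AdjoinRoot P), pb.finrank]
    rfl
  have hroot : (AdjoinRoot.root P) ^ (Fintype.card Fq ^ P.natDegree) = AdjoinRoot.root P := by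
    rw [← hcard]; exact FiniteField.pow_card _
  have hPmin : P = minpoly Fq (AdjoinRoot.root P) := by
    rw [AdjoinRoot.minpoly_root hP0, hm.leadingCoeff, inv_one, map_one, mul_one]
  have hdvd := minpoly.dvd Fq (AdjoinRoot.root P)
    (p := X ^ (Fintype.card Fq ^ P.natDegree) - X)
    (by rw [map_sub, map_pow, aeval_X, hroot, sub_self])
  rwa [← hPmin] at hdvd

/-- Counting: if `t` is a finset of monic irreducible polynomials of common degree `n ≠ 0`,
then `t.card * n ≤ q ^ n`. -/
lemma aux_count {n : ℕ} (hn : n ≠ 0) (t : Finset (Polynomial Fq))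
    (h : ∀ P ∈ t, P.Monic ∧ Irreducible P ∧ P.natDegree = n) :
    t.card * n ≤ Fintype.card Fq ^ n := by
  have hq : 1 < Fintype.card Fq := Fintype.one_lt_card
  have hdvd : (∏ P ∈ t, P) ∣ (X ^ (Fintype.card Fq ^ n) - X : Polynomial Fq) := by
    apply Finset.prod_dvd_of_coprime
    · intro P hP Q hQ hne
      obtain ⟨hPm, hPi, hPd⟩ := h P hP
      obtain ⟨hQm, hQi, hQd⟩ := h Q hQ
      simp only [Function.onFun]
      rw [hPi.coprime_iff_not_dvd]
      intro hdvd
      exact hne (Polynomial.eq_of_monic_of_associated hPm hQm (hPi.associated_of_dvd hQi hdvd))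
    · intro P hP
      obtain ⟨hPm, hPi, hPd⟩ := h P hP
      rw [← hPd]
      exact aux_irr_dvd hPm hPi
  have hne : (X ^ (Fintype.card Fq ^ n) - X : Polynomial Fq) ≠ 0 :=
    FiniteField.X_pow_card_pow_sub_X_ne_zero _ hn hq
  have hdeg := Polynomial.natDegree_le_of_dvd hdvd hne
  rw [Polynomial.natDegree_prod _ _ (fun P hP => ((h P hP).2.1).ne_zero)] at hdeg
  rw [Finset.sum_congr rfl (fun P hP => (h P hP).2.2), Finset.sum_const,
    smul_eq_mul] at hdeg
  rwa [FiniteField.X_pow_card_pow_sub_X_natDegree_eq _ hn hq] at hdeg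

/-- Monotonicity: `(m+k) * q^m ≤ m * q^(m+k)` for `q ≥ 2`, `m ≥ 1`. -/
lemma aux_mono {q : ℕ} (hq : 2 ≤ q) (m k : ℕ) (hm : 1 ≤ m) :
    (m + k) * q ^ m ≤ m * q ^ (m + k) := by
  induction k with
  | zero => simp
  | succ k ih =>
    have h2 : q ^ m ≤ q ^ (m + k) := Nat.pow_le_pow_right (by omega) (by omega)
    calc (m + (k + 1)) * q ^ m = (m + k) * q ^ m + q ^ m := by ring
      _ ≤ m * q ^ (m + k) + q ^ (m + k) := Nat.add_le_add ih h2
      _ = (m + 1) * q ^ (m + k) := by ring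
      _ ≤ (2 * m) * q ^ (m + k) := Nat.mul_le_mul_right _ (by omega)
      _ ≤ (q * m) * q ^ (m + k) := Nat.mul_le_mul_right _ (Nat.mul_le_mul_right m hq)
      _ = m * q ^ (m + k + 1) := by ring

/-- The set of monic irreducible divisors of a monic `R` coincides with its
normalized factors. -/
lemma aux_mem {R : Polynomial Fq} (hR : R.Monic) (P : Polynomial Fq) :
    (P.Monic ∧ Irreducible P ∧ P ∣ R) ↔ P ∈ (normalizedFactors R).toFinset := by
  constructor
  · rintro ⟨hm, hi, hd⟩
    obtain ⟨Q, hQ, hassoc⟩ := exists_mem_normalizedFactors_of_dvd hR.ne_zero hi hd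
    have hQm : Q.Monic := by
      rw [← normalize_normalized_factor _ hQ]
      exact Polynomial.monic_normalize (irreducible_of_normalized_factor _ hQ).ne_zero
    rw [Multiset.mem_toFinset, Polynomial.eq_of_monic_of_associated hm hQm hassoc]
    exact hQ
  · intro hP
    rw [Multiset.mem_toFinset] at hP
    have hi := irreducible_of_normalized_factor _ hP
    have hd := dvd_of_mem_normalizedFactors hP
    have hm : P.Monic := by
      rw [← normalize_normalized_factor _ hP]
      exact Polynomial.monic_normalize hi.ne_zero
    exact ⟨hm, hi, hd⟩

end Aux

/-- For monic `R` with `ω(R) ≥ 2`, `∑_{P∣R} deg P/(|P|-1) = O(log ω(R))` with an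
absolute implied constant. -/
theorem sum_deg_div_norm_sub_one_bound :
    ∃ C : ℝ, 0 < C ∧ ∀ (Fq : Type) [Field Fq] [Fintype Fq] (R : Polynomial Fq),
      R.Monic → 2 ≤ ffOmega R →
      ∑ᶠ (P : Polynomial Fq) (_ : P.Monic ∧ Irreducible P ∧ P ∣ R),
          (P.natDegree : ℝ) / ((Fintype.card Fq : ℝ) ^ P.natDegree - 1)
        ≤ C * Real.log (ffOmega R) := by
  have hlog2 : 0 < Real.log 2 := Real.log_pos (by norm_num)
  refine ⟨9 / Real.log 2, by positivity, ?_⟩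
  intro Fq _ _ R hR hω
  classical
  set q : ℕ := Fintype.card Fq with hqdef
  have hq2 : 2 ≤ q := Fintype.one_lt_card
  set s : Finset (Polynomial Fq) := (normalizedFactors R).toFinset with hsdef
  set ω : ℕ := ffOmega R with hωdef
  have hωs : ω = s.card := rfl
  have hω0 : 0 < ω := by omega
  set M : ℕ := Nat.clog q ω with hMdef
  have hωM : ω ≤ q ^ M := Nat.le_pow_clog hq2 _
  set f : Polynomial Fq → ℝ := fun P => (P.natDegree : ℝ) / ((q : ℝ) ^ P.natDegree - 1)
    with hfdef
  have key : ∀ P ∈ s, P.Monic ∧ Irreducible P ∧ P ∣ R := fun P hP => (aux_mem hR P).mpr hP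
  have hdegpos : ∀ P ∈ s, 1 ≤ P.natDegree := by
    intro P hP
    obtain ⟨hm, hi, -⟩ := key P hP
    rcases Nat.eq_zero_or_pos P.natDegree with h0 | h1
    · exact absurd (hm.natDegree_eq_zero.mp h0 ▸ hi) not_irreducible_one
    · exact h1
  -- convert the finsum to a finset sum
  have hconv : (∑ᶠ (P : Polynomial Fq) (_ : P.Monic ∧ Irreducible P ∧ P ∣ R),
      (P.natDegree : ℝ) / ((Fintype.card Fq : ℝ) ^ P.natDegree - 1)) = ∑ P ∈ s, f P := by
    have hset : {P : Polynomial Fq | P.Monic ∧ Irreducible P ∧ P ∣ R} = ↑s :=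
      Set.ext fun P => (aux_mem hR P).trans Finset.mem_coe.symm
    calc (∑ᶠ (P : Polynomial Fq) (_ : P.Monic ∧ Irreducible P ∧ P ∣ R),
          (P.natDegree : ℝ) / ((Fintype.card Fq : ℝ) ^ P.natDegree - 1))
        = ∑ᶠ P ∈ {P : Polynomial Fq | P.Monic ∧ Irreducible P ∧ P ∣ R}, f P := rfl
      _ = ∑ᶠ P ∈ (↑s : Set (Polynomial Fq)), f P := by rw [hset]
      _ = ∑ P ∈ s, f P := finsum_mem_coe_finset _ _
  rw [hconv]
  -- split the sum by degree ≤ M vs > M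
  rw [← Finset.sum_filter_add_sum_filter_not s (fun P => P.natDegree ≤ M) f]
  -- Part 1 : small degrees
  have h1 : ∑ P ∈ s.filter (fun P => P.natDegree ≤ M), f P ≤ 2 * (M + 1) := by
    rw [← Finset.sum_fiberwise_of_maps_to (g := fun P => P.natDegree)
      (t := Finset.range (M + 1))
      (fun P hP => by
        simp only [Finset.mem_filter] at hP
        exact Finset.mem_range.mpr (Nat.lt_succ_of_le hP.2)) f]
    have inner : ∀ n ∈ Finset.range (M + 1),
        (∑ P ∈ (s.filter (fun P => P.natDegree ≤ M)).filter (fun P => P.natDegree = n), f P)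
          ≤ 2 := by
      intro n _
      set u := (s.filter (fun P => P.natDegree ≤ M)).filter (fun P => P.natDegree = n) with hu
      have husub : ∀ P ∈ u, P ∈ s ∧ P.natDegree = n := by
        intro P hP
        rw [hu, Finset.mem_filter, Finset.mem_filter] at hP
        exact ⟨hP.1.1, hP.2⟩
      rcases u.eq_empty_or_nonempty with he | ⟨P0, hP0⟩
      · rw [he, Finset.sum_empty]; norm_num
      · have hn1 : 1 ≤ n := (husub P0 hP0).2 ▸ hdegpos P0 (husub P0 hP0).1
        have hcount : u.card * n ≤ q ^ n := by
          apply aux_count (by omega)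
          intro P hP
          obtain ⟨hPs, hPn⟩ := husub P hP
          obtain ⟨hm, hi, -⟩ := key P hPs
          exact ⟨hm, hi, hPn⟩
        have hsum : ∑ P ∈ u, f P = (u.card : ℝ) * ((n : ℝ) / ((q : ℝ) ^ n - 1)) := by
          calc ∑ P ∈ u, f P = ∑ _P ∈ u, ((n : ℝ) / ((q : ℝ) ^ n - 1)) :=
                Finset.sum_congr rfl (fun P hP => by
                  simp only [hfdef]
                  rw [(husub P hP).2])
            _ = (u.card : ℝ) * ((n : ℝ) / ((q : ℝ) ^ n - 1)) := by
                rw [Finset.sum_const, nsmul_eq_mul]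
        rw [hsum]
        have hA : (2 : ℝ) ≤ (q : ℝ) ^ n := by
          calc (2 : ℝ) = (2 : ℕ) ^ (1 : ℕ) := by norm_num
            _ ≤ ((q : ℕ) : ℝ) ^ n := by
                exact_mod_cast Nat.pow_le_pow_left hq2 1 |>.trans
                  (Nat.pow_le_pow_right (by omega) hn1)
        have hApos : (0 : ℝ) < (q : ℝ) ^ n - 1 := by linarith
        have hcount' : (u.card : ℝ) * (n : ℝ) ≤ (q : ℝ) ^ n := by exact_mod_cast hcount
        rw [mul_div_assoc', div_le_iff₀ hApos]
        nlinarith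
    calc (∑ n ∈ Finset.range (M + 1),
          ∑ P ∈ (s.filter (fun P => P.natDegree ≤ M)).filter (fun P => P.natDegree = n), f P)
        ≤ ∑ _n ∈ Finset.range (M + 1), (2 : ℝ) := Finset.sum_le_sum inner
      _ = 2 * (M + 1) := by
          rw [Finset.sum_const, Finset.card_range, nsmul_eq_mul]
          push_cast; ring
  -- Part 2 : large degrees
  have h2 : ∑ P ∈ s.filter (fun P => ¬ P.natDegree ≤ M), f P ≤ (M + 1 : ℝ) := by
    have hterm : ∀ P ∈ s.filter (fun P => ¬ P.natDegree ≤ M),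
        f P ≤ ((M : ℝ) + 1) / (ω : ℝ) := by
      intro P hP
      obtain ⟨hPs, hPM⟩ := Finset.mem_filter.mp hP
      set n := P.natDegree with hn
      have hnM : M + 1 ≤ n := by omega
      have hnat : n * q ^ (M + 1) ≤ (M + 1) * q ^ n := by
        have := aux_mono hq2 (M + 1) (n - (M + 1)) (by omega)
        rwa [Nat.add_sub_cancel' hnM] at this
      have hq1 : (1 : ℝ) < (q : ℝ) := by exact_mod_cast hq2
      have hB : (2 : ℝ) ≤ (q : ℝ) ^ n := by
        calc (2 : ℝ) ≤ (q : ℝ) := by exact_mod_cast hq2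
          _ = (q : ℝ) ^ (1 : ℕ) := (pow_one _).symm
          _ ≤ (q : ℝ) ^ n := pow_le_pow_right₀ (by linarith) (by omega)
      have hBpos : (0 : ℝ) < (q : ℝ) ^ n - 1 := by linarith
      have hB'pos : (0 : ℝ) < (q : ℝ) ^ (M + 1) := by positivity
      have step1 : f P ≤ 2 * (n : ℝ) / (q : ℝ) ^ n := by
        rw [hfdef]
        rw [div_le_div_iff₀ hBpos (by positivity)]
        have hn0 : (1 : ℝ) ≤ (n : ℝ) := by exact_mod_cast (by omega : 1 ≤ n)
        nlinarith
      have step2 : 2 * (n : ℝ) / (q : ℝ) ^ n ≤ 2 * ((M : ℝ) + 1) / (q : ℝ) ^ (M + 1) := by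
        rw [div_le_div_iff₀ (by positivity) hB'pos]
        have : (n : ℝ) * (q : ℝ) ^ (M + 1) ≤ ((M : ℝ) + 1) * (q : ℝ) ^ n := by
          exact_mod_cast hnat
        nlinarith
      have step3 : 2 * ((M : ℝ) + 1) / (q : ℝ) ^ (M + 1) ≤ ((M : ℝ) + 1) / (ω : ℝ) := by
        rw [div_le_div_iff₀ hB'pos (by exact_mod_cast hω0)]
        have h2ω : 2 * (ω : ℝ) ≤ (q : ℝ) ^ (M + 1) := by
          have : 2 * ω ≤ q ^ (M + 1) := by
            calc 2 * ω ≤ q * q ^ M := Nat.mul_le_mul hq2 hωM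
              _ = q ^ (M + 1) := by ring
          exact_mod_cast this
        nlinarith [(Nat.cast_pos (α := ℝ)).mpr hω0]
      linarith
    calc ∑ P ∈ s.filter (fun P => ¬ P.natDegree ≤ M), f P
        ≤ ∑ _P ∈ s.filter (fun P => ¬ P.natDegree ≤ M), ((M : ℝ) + 1) / (ω : ℝ) :=
          Finset.sum_le_sum hterm
      _ = ((s.filter (fun P => ¬ P.natDegree ≤ M)).card : ℝ) * (((M : ℝ) + 1) / (ω : ℝ)) := by
          rw [Finset.sum_const, nsmul_eq_mul]
      _ ≤ (ω : ℝ) * (((M : ℝ) + 1) / (ω : ℝ)) := by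
          apply mul_le_mul_of_nonneg_right
          · exact_mod_cast (Finset.card_filter_le _ _).trans_eq hωs.symm
          · positivity
      _ = (M + 1 : ℝ) := by
          field_simp
  -- Conclusion
  have hω2 : (2 : ℝ) ≤ (ω : ℝ) := by exact_mod_cast hω
  have hlogω : Real.log 2 ≤ Real.log ω := Real.log_le_log (by norm_num) hω2
  have hMbound : (M : ℝ) + 1 ≤ 3 * Real.log ω / Real.log 2 := by
    have hquot : 1 ≤ Real.log ω / Real.log 2 := (one_le_div hlog2).mpr hlogω
    have hre : 3 * Real.log ω / Real.log 2 = 3 * (Real.log ω / Real.log 2) := by ring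
    rw [hre]
    rcases Nat.eq_zero_or_pos M with hM0 | hM1
    · rw [hM0]; push_cast; linarith
    · have hlt : q ^ (M - 1) < ω := Nat.pow_pred_clog_lt_self hq2 (by omega)
      have h2pow : 2 ^ (M - 1) ≤ ω :=
        le_trans (Nat.pow_le_pow_left hq2 _) hlt.le
      have hcast : ((2 : ℝ)) ^ (M - 1 : ℕ) ≤ (ω : ℝ) := by exact_mod_cast h2pow
      have hlog : ((M - 1 : ℕ) : ℝ) * Real.log 2 ≤ Real.log ω := by
        rw [← Real.log_pow]
        exact Real.log_le_log (by positivity) hcast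
      have hcast2 : ((M - 1 : ℕ) : ℝ) = (M : ℝ) - 1 := by
        rw [Nat.cast_sub hM1]; norm_num
      rw [hcast2] at hlog
      have hM1' : (M : ℝ) - 1 ≤ Real.log ω / Real.log 2 := (le_div_iff₀ hlog2).mpr hlog
      linarith
  calc (∑ P ∈ s.filter (fun P => P.natDegree ≤ M), f P)
      + ∑ P ∈ s.filter (fun P => ¬ P.natDegree ≤ M), f P
      ≤ 2 * (M + 1 : ℝ) + (M + 1 : ℝ) := add_le_add h1 h2
    _ = 3 * ((M : ℝ) + 1) := by push_cast; ring
    _ ≤ 3 * (3 * Real.log ω / Real.log 2) := by linarith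
    _ = 9 / Real.log 2 * Real.log ω := by ring
end

section
/- limsup over monic R in F_q[T] with deg R → ∞ of ω(R)·(log_q log_q |R|)/(log_q |R|) equals 1. In particular, for all monic R with deg R ≥ 4, ω(R) ≤ (log_q |R|)/(log_q log_q |R|) + O((log_q |R|)/(log_q log_q |R|)²). -/
open Polynomial UniqueFactorizationMonoid
open scoped Classical

/-!
Upper bound: for every `m`, each distinct prime factor `P` of `R` satisfies
`m + 1 ≤ deg P + (m + 1 - deg P)⁺`, so `ω(R) (m + 1) ≤ deg R + ∑_{d ≤ m} (m + 1 - d) π(d)`,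
where `π(d) ≤ q ^ d / d` counts the monic irreducibles of degree `d` (they are distinct factors of
`X ^ q ^ d - X`). The sum is `O(q ^ m / m)`, and `m = ⌈log_q deg R⌉` gives
`ω(R) ≤ n / log_q n + O(n / (log_q n)²)` with `n = deg R`.

Lower bound: `X ^ q ^ m - X` is squarefree of degree `q ^ m` and all its irreducible factors have
degree dividing `m`, so it has at least `q ^ m / m` of them.
-/

open Finset

section Factors

variable {K : Type*} [Field K]

theorem monic_of_mem_normalizedFactors {f P : K[X]} (hP : P ∈ normalizedFactors f) :
    P.Monic :=
  normalize_normalized_factor P hP ▸ monic_normalize (ne_zero_of_mem_normalizedFactors hP)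

theorem sum_natDegree_le_of_subset_normalizedFactors {f : K[X]} {t : Finset K[X]}
    (ht : t ⊆ (normalizedFactors f).toFinset) : ∑ P ∈ t, P.natDegree ≤ f.natDegree := by
  rcases eq_or_ne f 0 with rfl | hf
  · simp_all
  have hdvd : ∏ P ∈ t, P ∣ f :=
    ((prod_dvd_prod_of_subset _ _ id ht).trans (Multiset.toFinset_prod_dvd_prod _)).trans
      (prod_normalizedFactors hf).dvd
  rw [← natDegree_prod _ _ fun P hP => ne_zero_of_mem_normalizedFactors
    (Multiset.mem_toFinset.mp (ht hP))]
  exact natDegree_le_of_dvd hdvd hf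

theorem sum_natDegree_normalizedFactors_of_squarefree {f : K[X]} (hf : Squarefree f) :
    ∑ P ∈ (normalizedFactors f).toFinset, P.natDegree = f.natDegree := by
  have hnodup := (squarefree_iff_nodup_normalizedFactors hf.ne_zero).mp hf
  rw [Finset.sum_eq_multiset_sum, Multiset.toFinset_val, hnodup.dedup,
    ← natDegree_multiset_prod _ (zero_notMem_normalizedFactors f)]
  exact natDegree_eq_of_degree_eq
    (degree_eq_degree_of_associated (prod_normalizedFactors hf.ne_zero))

theorem ffOmega_mul_succ_le (f : K[X]) (m : ℕ) :
    ffOmega f * (m + 1) ≤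
      f.natDegree + ∑ P ∈ (normalizedFactors f).toFinset, (m + 1 - P.natDegree) :=
  calc ffOmega f * (m + 1)
      = ∑ P ∈ (normalizedFactors f).toFinset, (m + 1) := by rw [sum_const, smul_eq_mul]; rfl
    _ ≤ ∑ P ∈ (normalizedFactors f).toFinset, (P.natDegree + (m + 1 - P.natDegree)) :=
        sum_le_sum fun _ _ => le_add_tsub
    _ ≤ _ := by
        rw [sum_add_distrib]
        exact Nat.add_le_add_right (sum_natDegree_le_of_subset_normalizedFactors subset_rfl) _

theorem natDegree_le_ffOmega_mul {f : K[X]} (hf : Squarefree f) {m : ℕ}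
    (hm : ∀ P ∈ normalizedFactors f, P.natDegree ≤ m) : f.natDegree ≤ ffOmega f * m :=
  calc f.natDegree = ∑ P ∈ (normalizedFactors f).toFinset, P.natDegree :=
        (sum_natDegree_normalizedFactors_of_squarefree hf).symm
    _ ≤ ∑ P ∈ (normalizedFactors f).toFinset, m :=
        sum_le_sum fun P hP => hm P (Multiset.mem_toFinset.mp hP)
    _ = ffOmega f * m := by rw [sum_const, smul_eq_mul]; rfl

end Factors

theorem sum_sq_mul_pow_le {q : ℕ} (hq : 2 ≤ q) (m : ℕ) :
    ∑ d ∈ range (m + 1), (m + 1 - d) ^ 2 * q ^ d ≤ 12 * q ^ m := by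
  -- `∑_{j ≤ m} (j + 1)² / 2 ^ j = 12 - (m² + 6m + 11) / 2 ^ m`, and `q ≥ 2`
  suffices h : ∀ m, 2 ^ m * ∑ d ∈ range (m + 1), (m + 1 - d) ^ 2 * q ^ d
      + (m ^ 2 + 6 * m + 11) * q ^ m ≤ 2 ^ m * (12 * q ^ m) from
    Nat.le_of_mul_le_mul_left (le_of_add_le_left (h m)) (by positivity)
  intro m
  induction m with
  | zero => simp
  | succ m ih =>
    have hrec : ∑ d ∈ range (m + 2), (m + 1 + 1 - d) ^ 2 * q ^ d
        = q * ∑ d ∈ range (m + 1), (m + 1 - d) ^ 2 * q ^ d + (m + 2) ^ 2 := by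
      rw [sum_range_succ', mul_sum]
      simp only [Nat.add_sub_add_right, pow_succ, Nat.sub_zero, pow_zero, mul_one]
      exact congrArg₂ _ (sum_congr rfl fun _ _ => by ring) rfl
    have hpow : 2 * 2 ^ m ≤ q * q ^ m := Nat.mul_le_mul hq (Nat.pow_le_pow_left hq _)
    rw [hrec, pow_succ 2 m, pow_succ q m]
    generalize ∑ d ∈ range (m + 1), (m + 1 - d) ^ 2 * q ^ d = S at ih ⊢
    generalize 2 ^ m = A at ih hpow ⊢
    generalize q ^ m = B at ih hpow ⊢
    nlinarith [Nat.mul_le_mul_left (2 * q) ih, Nat.mul_le_mul_left ((m + 2) ^ 2) hpow]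

theorem pow_ceil_logb_le {b x : ℝ} (hb : 1 < b) (hx : 1 ≤ x) :
    b ^ ⌈Real.logb b x⌉₊ ≤ b * x := by
  have hL : 0 ≤ Real.logb b x := Real.logb_nonneg hb hx
  calc b ^ ⌈Real.logb b x⌉₊ = b ^ (⌈Real.logb b x⌉₊ : ℝ) := (Real.rpow_natCast _ _).symm
    _ ≤ b ^ (Real.logb b x + 1) :=
        Real.rpow_le_rpow_of_exponent_le hb.le (Nat.ceil_lt_add_one hL).le
    _ = b * x := by
        rw [Real.rpow_add_one (by positivity),
          Real.rpow_logb (by positivity) hb.ne' (by positivity), mul_comm]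

section FiniteField

variable {Fq : Type*} [Field Fq] [Finite Fq]

theorem mem_normalizedFactors_X_pow_card_pow_sub_X {P : Fq[X]} (hP : Irreducible P)
    (hPm : P.Monic) : P ∈ normalizedFactors (X ^ Nat.card Fq ^ P.natDegree - X : Fq[X]) := by
  rw [Polynomial.mem_normalizedFactors_iff
    (FiniteField.X_pow_card_pow_sub_X_ne_zero Fq hP.natDegree_pos.ne' Finite.one_lt_card)]
  exact ⟨hP, hPm, hP.natDegree_dvd_iff_dvd_X_pow_card_pow_sub_X.mp dvd_rfl⟩

theorem mul_card_le_card_pow_of_irreducible {d : ℕ} {t : Finset Fq[X]}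
    (ht : ∀ P ∈ t, Irreducible P ∧ P.Monic ∧ P.natDegree = d) :
    d * #t ≤ Nat.card Fq ^ d := by
  rcases t.eq_empty_or_nonempty with rfl | ⟨P₀, hP₀⟩
  · simp
  obtain ⟨hP₀, -, rfl⟩ := ht P₀ hP₀
  have hsub : t ⊆ (normalizedFactors (X ^ Nat.card Fq ^ P₀.natDegree - X : Fq[X])).toFinset :=
    fun P hP => by
      obtain ⟨hirr, hmon, hdeg⟩ := ht P hP
      rw [Multiset.mem_toFinset, ← hdeg]
      exact mem_normalizedFactors_X_pow_card_pow_sub_X hirr hmon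
  calc P₀.natDegree * #t = ∑ P ∈ t, P.natDegree := by
        rw [sum_congr rfl fun P hP => (ht P hP).2.2, sum_const, smul_eq_mul, mul_comm]
    _ ≤ _ := sum_natDegree_le_of_subset_normalizedFactors hsub
    _ = _ := FiniteField.X_pow_card_pow_sub_X_natDegree_eq Fq hP₀.natDegree_pos.ne'
        Finite.one_lt_card

theorem squarefree_X_pow_card_pow_sub_X (m : ℕ) (hm : m ≠ 0) :
    Squarefree (X ^ Nat.card Fq ^ m - X : Fq[X]) := by
  have := Fintype.ofFinite Fq
  refine (galois_poly_separable (ringChar Fq) _ ?_).squarefree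
  exact (ringChar.dvd (FiniteField.cast_card_eq_zero Fq)).trans
    (by rw [Fintype.card_eq_nat_card]; exact dvd_pow_self _ hm)

theorem mul_tsub_mul_card_le {m d : ℕ} {t : Finset Fq[X]}
    (ht : ∀ P ∈ t, Irreducible P ∧ P.Monic ∧ P.natDegree = d) :
    m * (m + 1 - d) * #t ≤ (m + 1 - d) ^ 2 * Nat.card Fq ^ d := by
  rcases Nat.eq_zero_or_pos d with rfl | hd
  · have : t = ∅ := eq_empty_of_forall_notMem fun P hP =>
      (ht P hP).1.natDegree_pos.ne' (ht P hP).2.2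
    simp [this]
  have hm : m * (m + 1 - d) ≤ d * (m + 1 - d) * (m + 1 - d) := by
    rcases le_or_gt d m with hdm | hdm
    · refine Nat.mul_le_mul_right _ ?_
      obtain ⟨e, rfl⟩ := Nat.exists_eq_add_of_le hdm
      rw [show d + e + 1 - d = e + 1 by omega]
      nlinarith
    · simp [show m + 1 - d = 0 by omega]
  calc m * (m + 1 - d) * #t ≤ d * (m + 1 - d) * (m + 1 - d) * #t := Nat.mul_le_mul_right _ hm
    _ = (m + 1 - d) ^ 2 * (d * #t) := by ring
    _ ≤ _ := Nat.mul_le_mul_left _ (mul_card_le_card_pow_of_irreducible ht)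

theorem mul_sum_tsub_natDegree_le (f : Fq[X]) (m : ℕ) :
    m * ∑ P ∈ (normalizedFactors f).toFinset, (m + 1 - P.natDegree)
      ≤ ∑ d ∈ range (m + 1), (m + 1 - d) ^ 2 * Nat.card Fq ^ d := by
  set S := (normalizedFactors f).toFinset
  calc m * ∑ P ∈ S, (m + 1 - P.natDegree)
      = ∑ P ∈ S with P.natDegree ∈ range (m + 1), m * (m + 1 - P.natDegree) := by
        rw [mul_sum]
        refine (sum_filter_of_ne fun P _ h => ?_).symm
        rw [mem_range]
        by_contra h'
        exact h (by rw [Nat.sub_eq_zero_of_le (not_lt.mp h'), mul_zero])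
    _ = ∑ d ∈ range (m + 1), ∑ P ∈ S with P.natDegree = d, m * (m + 1 - d) := by
        rw [sum_fiberwise_eq_sum_filter']
    _ ≤ _ := sum_le_sum fun d _ => by
        rw [sum_const, smul_eq_mul, mul_comm]
        refine mul_tsub_mul_card_le fun P hP => ?_
        obtain ⟨hPS, hdeg⟩ := mem_filter.mp hP
        have hP := Multiset.mem_toFinset.mp hPS
        exact ⟨irreducible_of_normalized_factor P hP, monic_of_mem_normalizedFactors hP, hdeg⟩

theorem mul_succ_mul_ffOmega_le (f : Fq[X]) (m : ℕ) :
    m * (m + 1) * ffOmega f ≤ m * f.natDegree + 12 * Nat.card Fq ^ m :=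
  calc m * (m + 1) * ffOmega f = m * (ffOmega f * (m + 1)) := by ring
    _ ≤ m * (f.natDegree + ∑ P ∈ (normalizedFactors f).toFinset, (m + 1 - P.natDegree)) :=
        Nat.mul_le_mul_left _ (ffOmega_mul_succ_le f m)
    _ = m * f.natDegree + m * ∑ P ∈ (normalizedFactors f).toFinset, (m + 1 - P.natDegree) :=
        mul_add _ _ _
    _ ≤ _ := Nat.add_le_add_left ((mul_sum_tsub_natDegree_le f m).trans
        (sum_sq_mul_pow_le Finite.one_lt_card m)) _

theorem ffOmega_le {R : Fq[X]} (hR : 1 < R.natDegree) :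
    (ffOmega R : ℝ) ≤ R.natDegree / Real.logb (Nat.card Fq) R.natDegree
      + 12 * Nat.card Fq * R.natDegree / Real.logb (Nat.card Fq) R.natDegree ^ 2 := by
  set n := R.natDegree
  set q := Nat.card Fq
  set L := Real.logb q n
  have hq : (1 : ℝ) < q := by exact_mod_cast Finite.one_lt_card
  have hn : (1 : ℝ) < n := by exact_mod_cast hR
  have hL : 0 < L := Real.logb_pos hq hn
  set m := ⌈L⌉₊
  have hLm : L ≤ m := Nat.le_ceil L
  have hm : (0 : ℝ) < m := hL.trans_le hLm
  have hkey : (m * (m + 1) * ffOmega R : ℝ) ≤ m * n + 12 * (q * n) :=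
    calc (m * (m + 1) * ffOmega R : ℝ) ≤ m * n + 12 * q ^ m := by
          exact_mod_cast mul_succ_mul_ffOmega_le R m
      _ ≤ m * n + 12 * (q * n) := by gcongr; exact pow_ceil_logb_le hq hn.le
  calc (ffOmega R : ℝ) ≤ (m * n + 12 * (q * n)) / (m * (m + 1)) := by
        rw [le_div_iff₀ (by positivity)]
        linarith
    _ = n / (m + 1) + 12 * q * n / (m * (m + 1)) := by field_simp
    _ ≤ n / L + 12 * q * n / L ^ 2 := by
        gcongr
        · linarith
        · rw [sq]; gcongr; linarith

theorem ffOmega_mul_logb_div_le {R : Fq[X]} (hR : 1 < R.natDegree) :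
    (ffOmega R : ℝ) * Real.logb (Nat.card Fq) R.natDegree / R.natDegree
      ≤ 1 + 12 * Nat.card Fq / Real.logb (Nat.card Fq) R.natDegree := by
  have hq : (1 : ℝ) < Nat.card Fq := by exact_mod_cast Finite.one_lt_card
  have hn : (1 : ℝ) < R.natDegree := by exact_mod_cast hR
  have hL := Real.logb_pos hq hn
  calc (ffOmega R : ℝ) * Real.logb (Nat.card Fq) R.natDegree / R.natDegree
      ≤ (R.natDegree / Real.logb (Nat.card Fq) R.natDegree
          + 12 * Nat.card Fq * R.natDegree / Real.logb (Nat.card Fq) R.natDegree ^ 2)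
        * Real.logb (Nat.card Fq) R.natDegree / R.natDegree := by
        gcongr
        exact ffOmega_le hR
    _ = _ := by field_simp

theorem exists_forall_ffOmega_mul_logb_div_le {ε : ℝ} (hε : 0 < ε) :
    ∃ D : ℕ, ∀ R : Fq[X], D ≤ R.natDegree →
      (ffOmega R : ℝ) * Real.logb (Nat.card Fq) R.natDegree / R.natDegree ≤ 1 + ε := by
  have hq : (1 : ℝ) < Nat.card Fq := by exact_mod_cast Finite.one_lt_card
  obtain ⟨D, hD⟩ := Filter.eventually_atTop.mp
    (((Real.tendsto_logb_atTop hq).comp tendsto_natCast_atTop_atTop).eventually_ge_atTop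
      (12 * Nat.card Fq / ε))
  refine ⟨max D 2, fun R hR => (ffOmega_mul_logb_div_le (le_of_max_le_right hR)).trans ?_⟩
  have hL : 12 * Nat.card Fq / ε ≤ Real.logb (Nat.card Fq) R.natDegree :=
    hD _ (le_of_max_le_left hR)
  have hL0 : 0 < Real.logb (Nat.card Fq) R.natDegree :=
    (by positivity : (0 : ℝ) < 12 * Nat.card Fq / ε).trans_le hL
  rw [div_le_iff₀ hε] at hL
  rw [add_le_add_iff_left, div_le_iff₀ hL0]
  linarith

theorem natCard_pow_le_ffOmega_X_pow_card_pow_sub_X_mul {m : ℕ} (hm : m ≠ 0) :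
    Nat.card Fq ^ m ≤ ffOmega (X ^ Nat.card Fq ^ m - X : Fq[X]) * m := by
  calc Nat.card Fq ^ m = (X ^ Nat.card Fq ^ m - X : Fq[X]).natDegree :=
        (FiniteField.X_pow_card_pow_sub_X_natDegree_eq Fq hm Finite.one_lt_card).symm
    _ ≤ _ := natDegree_le_ffOmega_mul (squarefree_X_pow_card_pow_sub_X m hm) fun P hP =>
        Nat.le_of_dvd (Nat.pos_of_ne_zero hm)
          ((irreducible_of_normalized_factor P hP).natDegree_dvd_of_dvd_X_pow_card_pow_sub_X
            (dvd_of_mem_normalizedFactors hP))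

theorem exists_monic_le_natDegree_one_le_ffOmega_mul_logb_div (D : ℕ) :
    ∃ R : Fq[X], R.Monic ∧ D ≤ R.natDegree ∧
      1 ≤ (ffOmega R : ℝ) * Real.logb (Nat.card Fq) R.natDegree / R.natDegree := by
  set q := Nat.card Fq
  have hq : 1 < q := Finite.one_lt_card
  have hdeg : (X ^ q ^ (D + 1) - X : Fq[X]).natDegree = q ^ (D + 1) :=
    FiniteField.X_pow_card_pow_sub_X_natDegree_eq Fq D.succ_ne_zero hq
  refine ⟨X ^ q ^ (D + 1) - X, monic_X_pow_sub ?_, ?_, ?_⟩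
  · rw [degree_X]
    exact_mod_cast Nat.one_lt_pow D.succ_ne_zero hq
  · rw [hdeg]
    have := Nat.lt_pow_self hq (n := D + 1)
    omega
  · have hω : (q : ℝ) ^ (D + 1) ≤ ffOmega (X ^ q ^ (D + 1) - X : Fq[X]) * (D + 1 : ℕ) := by
      exact_mod_cast natCard_pow_le_ffOmega_X_pow_card_pow_sub_X_mul D.succ_ne_zero
    have hq' : (1 : ℝ) < q := by exact_mod_cast hq
    rw [hdeg, Nat.cast_pow, Real.logb_pow, Real.logb_self_eq_one hq', mul_one,
      le_div_iff₀ (by positivity), one_mul]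
    exact_mod_cast hω

end FiniteField

/-- `limsup_{deg R → ∞, R monic} ω(R)·(log_q log_q |R|)/(log_q |R|) = 1`
(note `log_q |R| = deg R`), together with the bound
`ω(R) ≤ (deg R)/(log_q deg R) + O((deg R)/(log_q deg R)²)` for `deg R ≥ 4`. -/
theorem omega_limsup_eq_one {Fq : Type*} [Field Fq] [Fintype Fq] :
    (∀ ε : ℝ, 0 < ε → ∃ D : ℕ, ∀ R : Polynomial Fq, R.Monic → D ≤ R.natDegree →
        (ffOmega R : ℝ) * Real.logb (Fintype.card Fq) (R.natDegree) / R.natDegree ≤ 1 + ε)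
    ∧ (∀ ε : ℝ, 0 < ε → ∀ D : ℕ, ∃ R : Polynomial Fq, R.Monic ∧ D ≤ R.natDegree ∧
        1 - ε ≤ (ffOmega R : ℝ) * Real.logb (Fintype.card Fq) (R.natDegree) / R.natDegree)
    ∧ ∃ C : ℝ, ∀ R : Polynomial Fq, R.Monic → 4 ≤ R.natDegree →
        (ffOmega R : ℝ)
          ≤ (R.natDegree : ℝ) / Real.logb (Fintype.card Fq) (R.natDegree)
            + C * R.natDegree / (Real.logb (Fintype.card Fq) (R.natDegree)) ^ 2 := by
  simp only [Fintype.card_eq_nat_card]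
  refine ⟨fun ε hε => ?_, fun ε hε D => ?_,
    ⟨12 * Nat.card Fq, fun R _ hR => ffOmega_le (by omega)⟩⟩
  · obtain ⟨D, hD⟩ := exists_forall_ffOmega_mul_logb_div_le (Fq := Fq) hε
    exact ⟨D, fun R _ => hD R⟩
  · obtain ⟨R, hR, hD, h1⟩ := exists_monic_le_natDegree_one_le_ffOmega_mul_logb_div (Fq := Fq) D
    exact ⟨R, hR, hD, by linarith⟩
end

section
/- Let F, K be monic polynomials in F_q[T] and x ≥ 0 with deg(KF) < x. Then ∑_{N monic, deg N = x, gcd(N,F)=1} d(N)·d(KF + N) ≪ q^x·x²·∑_{H | K, deg H ≤ x/2} d(H)/|H|, where d is the divisor function on F_q[T]. -/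
open Polynomial
open scoped Classical

/-- The divisor function on `F_q[T]`: the number of monic divisors of `N`. -/
noncomputable def ffD {Fq : Type*} [Field Fq] (N : Polynomial Fq) : ℕ :=
  Nat.card {D : Polynomial Fq // D.Monic ∧ D ∣ N}

/-! Since `d(N) ≤ 2 · #{A ∣ N : deg A ≤ deg N / 2}`, the sum is at most
`4 ∑_{A, B} #{N : A ∣ N, B ∣ KF + N}` over monic `A, B` of degree `≤ x / 2`. Such `N` exist only if
`G = gcd(A, B)` divides `K` (it divides `N` and `KF`, and `(N, F) = 1`), and then they form a single
residue class modulo `lcm(A, B)`, so there are at most `q^x |G| / (|A| |B|)` of them. Writing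
`A = G A'`, `B = G B'` and summing over `A', B'` bounds the total by
`4 q^x (x / 2 + 1)² ∑_{G ∣ K} 1 / |G|`. -/

open Finset hiding gcd lcm

theorem Finset.sum_card_filter_mul_card_filter {α β γ : Type*} (s : Finset α) (t : Finset β)
    (u : Finset γ) (p : β → α → Prop) (r : γ → α → Prop) :
    ∑ a ∈ s, #{b ∈ t | p b a} * #{c ∈ u | r c a} =
      ∑ bc ∈ t ×ˢ u, #{a ∈ s | p bc.1 a ∧ r bc.2 a} := by
  simp only [card_filter, sum_mul_sum, sum_product, ite_zero_mul_ite_zero, mul_one]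
  rw [sum_comm]
  exact sum_congr rfl fun _ _ => sum_comm

theorem IsCoprime.dvd_of_dvd_of_dvd_mul_add {R : Type*} [CommRing R] {N F K d : R}
    (hNF : IsCoprime N F) (hN : d ∣ N) (hKFN : d ∣ K * F + N) : d ∣ K :=
  (hNF.of_isCoprime_of_dvd_left hN).dvd_of_dvd_mul_right ((dvd_add_left hN).1 hKFN)

namespace Polynomial

section FiniteSemiring

variable {R : Type*} [Semiring R]

theorem injOn_coeff_isMonicOfDegree (d : ℕ) :
    Set.InjOn (fun (p : R[X]) (i : Fin d) => p.coeff i) {p | IsMonicOfDegree p d} := by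
  intro p hp r hr h
  ext m
  rcases lt_or_ge m d with hm | hm
  · exact congr_fun h ⟨m, hm⟩
  · exact hp.coeff_eq hr hm

theorem finite_setOf_isMonicOfDegree [Finite R] (d : ℕ) : {p : R[X] | IsMonicOfDegree p d}.Finite :=
  (Set.toFinite _).of_finite_image (injOn_coeff_isMonicOfDegree d)

noncomputable def monicOfDegree (R : Type*) [Semiring R] [Finite R] (d : ℕ) : Finset R[X] :=
  (finite_setOf_isMonicOfDegree d).toFinset

noncomputable def monicOfDegreeLE (R : Type*) [Semiring R] [Finite R] (n : ℕ) : Finset R[X] :=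
  (range (n + 1)).biUnion (monicOfDegree R)

variable [Finite R] {d n : ℕ} {p : R[X]}

theorem mem_monicOfDegree : p ∈ monicOfDegree R d ↔ IsMonicOfDegree p d :=
  Set.Finite.mem_toFinset _

theorem mem_monicOfDegreeLE : p ∈ monicOfDegreeLE R n ↔ p.Monic ∧ p.natDegree ≤ n := by
  simp only [monicOfDegreeLE, mem_biUnion, mem_range, mem_monicOfDegree, isMonicOfDegree_iff']
  exact ⟨fun ⟨_, hd, hp, hm⟩ => ⟨hm, by omega⟩, fun ⟨hm, hp⟩ => ⟨_, by omega, rfl, hm⟩⟩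

variable [Fintype R]

theorem card_monicOfDegree_le (d : ℕ) : #(monicOfDegree R d) ≤ Fintype.card R ^ d :=
  calc #(monicOfDegree R d) ≤ #(univ : Finset (Fin d → R)) :=
        card_le_card_of_injOn _ (fun _ _ => mem_coe.2 (mem_univ _)) fun _ hp _ hr =>
          injOn_coeff_isMonicOfDegree d (mem_monicOfDegree.1 hp) (mem_monicOfDegree.1 hr)
    _ = Fintype.card R ^ d := by simp

theorem sum_monicOfDegreeLE_inv_pow_natDegree_le (n : ℕ) :
    ∑ A ∈ monicOfDegreeLE R n, ((Fintype.card R : ℝ) ^ A.natDegree)⁻¹ ≤ n + 1 := by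
  have hdisj : (range (n + 1) : Set ℕ).PairwiseDisjoint (monicOfDegree R) :=
    fun d₁ _ d₂ _ hne => disjoint_left.2 fun p h₁ h₂ =>
      hne ((mem_monicOfDegree.1 h₁).natDegree_eq ▸ (mem_monicOfDegree.1 h₂).natDegree_eq)
  rw [monicOfDegreeLE, sum_biUnion hdisj]
  calc ∑ d ∈ range (n + 1), ∑ A ∈ monicOfDegree R d, ((Fintype.card R : ℝ) ^ A.natDegree)⁻¹
      = ∑ d ∈ range (n + 1), #(monicOfDegree R d) / (Fintype.card R : ℝ) ^ d := by
        refine sum_congr rfl fun d _ => ?_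
        rw [sum_congr rfl fun A hA => by rw [(mem_monicOfDegree.1 hA).natDegree_eq],
          sum_const, nsmul_eq_mul, div_eq_mul_inv]
    _ ≤ ∑ _d ∈ range (n + 1), (1 : ℝ) := by
        refine sum_le_sum fun d _ => div_le_one_of_le₀ ?_ (by positivity)
        exact_mod_cast card_monicOfDegree_le d
    _ = n + 1 := by simp

end FiniteSemiring

theorem natDegree_gcd_add_natDegree_lcm {k : Type*} [Field k] {A B : k[X]} (hA : A ≠ 0)
    (hB : B ≠ 0) :
    (gcd A B).natDegree + (lcm A B).natDegree = A.natDegree + B.natDegree := by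
  rw [← natDegree_mul (gcd_ne_zero_of_left hA) (lcm_ne_zero_iff.2 ⟨hA, hB⟩),
    ← natDegree_mul hA hB]
  exact natDegree_eq_of_degree_eq (degree_eq_degree_of_associated (gcd_mul_lcm A B))

section FiniteField

variable {Fq : Type*} [Field Fq] [Fintype Fq]

theorem ffD_eq_card_filter_dvd {N : Fq[X]} (hN : N ≠ 0) :
    ffD N = #{D ∈ monicOfDegreeLE Fq N.natDegree | D ∣ N} := by
  rw [ffD, ← Nat.card_eq_finsetCard]
  refine Nat.card_congr (Equiv.subtypeEquivRight fun D => ?_)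
  simp only [mem_filter, mem_monicOfDegreeLE]
  exact ⟨fun ⟨hm, hd⟩ => ⟨⟨hm, natDegree_le_of_dvd hd hN⟩, hd⟩, fun ⟨⟨hm, _⟩, hd⟩ => ⟨hm, hd⟩⟩

theorem one_le_ffD {N : Fq[X]} (hN : N ≠ 0) : 1 ≤ ffD N := by
  rw [ffD_eq_card_filter_dvd hN, Nat.one_le_iff_ne_zero, card_ne_zero]
  exact ⟨1, mem_filter.2 ⟨mem_monicOfDegreeLE.2 ⟨monic_one, by simp⟩, one_dvd N⟩⟩

/-- A divisor of `N` of degree `> deg N / 2` has a cofactor of degree `≤ deg N / 2`. -/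
theorem ffD_le_two_mul_card_filter_dvd {N : Fq[X]} (hN : N.Monic) :
    ffD N ≤ 2 * #{A ∈ monicOfDegreeLE Fq (N.natDegree / 2) | A ∣ N} := by
  set small := {A ∈ monicOfDegreeLE Fq (N.natDegree / 2) | A ∣ N}
  have hcover : {D ∈ monicOfDegreeLE Fq N.natDegree | D ∣ N} ⊆ small ∪ small.image (N /ₘ ·) := by
    intro D hD
    obtain ⟨⟨hDm, -⟩, E, hDE⟩ := by simpa only [mem_filter, mem_monicOfDegreeLE] using hD
    have hEm : E.Monic := hDm.of_mul_monic_left (hDE ▸ hN)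
    have hdeg : N.natDegree = D.natDegree + E.natDegree := hDE ▸ hDm.natDegree_mul hEm
    simp only [small, mem_union, mem_image, mem_filter, mem_monicOfDegreeLE]
    by_cases hD2 : D.natDegree ≤ N.natDegree / 2
    · exact .inl ⟨⟨hDm, hD2⟩, hDE ▸ dvd_mul_right D E⟩
    · refine .inr ⟨E, ⟨⟨hEm, by omega⟩, hDE ▸ dvd_mul_left E D⟩, ?_⟩
      rw [hDE, mul_comm, mul_divByMonic_cancel_left _ hEm]
  rw [ffD_eq_card_filter_dvd hN.ne_zero, two_mul]
  calc _ ≤ #(small ∪ small.image (N /ₘ ·)) := card_le_card hcover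
    _ ≤ #small + #(small.image (N /ₘ ·)) := card_union_le _ _
    _ ≤ #small + #small := Nat.add_le_add_left card_image_le _

theorem card_filter_modByMonic_eq_le {L : Fq[X]} (hL : L.Monic) {x : ℕ} (hLx : L.natDegree ≤ x)
    (c : Fq[X]) :
    #{N ∈ monicOfDegree Fq x | N %ₘ L = c} ≤ Fintype.card Fq ^ (x - L.natDegree) := by
  refine le_trans (card_le_card_of_injOn (· /ₘ L) (t := monicOfDegree Fq (x - L.natDegree))
    ?_ ?_) (card_monicOfDegree_le _)
  · intro N hN
    obtain ⟨hNx, -⟩ := mem_filter.1 hN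
    obtain ⟨hNd, hNm⟩ := mem_monicOfDegree.1 hNx
    have hLN : L.degree ≤ N.degree := by
      rw [degree_eq_natDegree hL.ne_zero, degree_eq_natDegree hNm.ne_zero, hNd]
      exact_mod_cast hLx
    refine mem_coe.2 (mem_monicOfDegree.2 ⟨?_, ?_⟩)
    · rw [natDegree_divByMonic _ hL, hNd]
    · rw [Monic, leadingCoeff_divByMonic_of_monic hL hLN, hNm.leadingCoeff]
  · intro N₁ h₁ N₂ h₂ h
    rw [← modByMonic_add_div N₁ L, ← modByMonic_add_div N₂ L, (mem_filter.1 h₁).2,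
      (mem_filter.1 h₂).2]
    exact congrArg (c + L * ·) h

/-- All such `N` lie in one residue class modulo `lcm A B`. -/
theorem card_filter_dvd_and_dvd_add_le {A B : Fq[X]} (hA : A.Monic) (hB : B.Monic) {x : ℕ}
    (hx : A.natDegree + B.natDegree ≤ x) (M : Fq[X]) :
    (#{N ∈ monicOfDegree Fq x | A ∣ N ∧ B ∣ M + N} : ℝ) ≤
      (Fintype.card Fq : ℝ) ^ x * ((Fintype.card Fq : ℝ) ^ (gcd A B).natDegree /
        ((Fintype.card Fq : ℝ) ^ A.natDegree * (Fintype.card Fq : ℝ) ^ B.natDegree)) := by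
  have hL : (lcm A B).Monic := by
    simpa using monic_normalize (lcm_ne_zero_iff.2 ⟨hA.ne_zero, hB.ne_zero⟩)
  have hdeg := natDegree_gcd_add_natDegree_lcm hA.ne_zero hB.ne_zero
  have hLx : (lcm A B).natDegree ≤ x := by omega
  rcases {N ∈ monicOfDegree Fq x | A ∣ N ∧ B ∣ M + N}.eq_empty_or_nonempty with hempty | ⟨N₀, hN₀⟩
  · rw [hempty, card_empty, Nat.cast_zero]
    positivity
  obtain ⟨hN₀x, hAN₀, hBN₀⟩ := mem_filter.1 hN₀
  have hresidue : {N ∈ monicOfDegree Fq x | A ∣ N ∧ B ∣ M + N} ⊆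
      {N ∈ monicOfDegree Fq x | N %ₘ lcm A B = N₀ %ₘ lcm A B} := by
    refine monotone_filter_right _ fun N _ ⟨hAN, hBN⟩ => ?_
    rw [← sub_eq_zero, ← sub_modByMonic, modByMonic_eq_zero_iff_dvd hL]
    refine lcm_dvd (dvd_sub hAN hAN₀) ?_
    simpa using dvd_sub hBN hBN₀
  have hq : (0 : ℝ) < Fintype.card Fq := by exact_mod_cast Fintype.card_pos
  calc (#{N ∈ monicOfDegree Fq x | A ∣ N ∧ B ∣ M + N} : ℝ)
      ≤ (Fintype.card Fq : ℝ) ^ (x - (lcm A B).natDegree) := by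
        exact_mod_cast (card_le_card hresidue).trans (card_filter_modByMonic_eq_le hL hLx _)
    _ = _ := by
        rw [pow_sub₀ _ hq.ne' hLx, ← pow_add, ← hdeg, pow_add]
        field_simp

theorem sum_filter_dvd_inv_pow_natDegree_le {G : Fq[X]} (hG : G.Monic) (n : ℕ) :
    ∑ A ∈ monicOfDegreeLE Fq n with G ∣ A, ((Fintype.card Fq : ℝ) ^ A.natDegree)⁻¹ ≤
      (n + 1) / (Fintype.card Fq : ℝ) ^ G.natDegree := by
  have hsub : {A ∈ monicOfDegreeLE Fq n | G ∣ A} ⊆ (monicOfDegreeLE Fq n).image (G * ·) := by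
    intro A hA
    obtain ⟨⟨hAm, hAn⟩, Q, rfl⟩ := by simpa only [mem_filter, mem_monicOfDegreeLE] using hA
    have hQm : Q.Monic := hG.of_mul_monic_left hAm
    refine mem_image.2 ⟨Q, mem_monicOfDegreeLE.2 ⟨hQm, ?_⟩, rfl⟩
    rw [hG.natDegree_mul hQm] at hAn
    omega
  calc _ ≤ ∑ A ∈ (monicOfDegreeLE Fq n).image (G * ·),
        ((Fintype.card Fq : ℝ) ^ A.natDegree)⁻¹ :=
        sum_le_sum_of_subset_of_nonneg hsub fun _ _ _ => by positivity
    _ = (∑ Q ∈ monicOfDegreeLE Fq n, ((Fintype.card Fq : ℝ) ^ Q.natDegree)⁻¹) /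
          (Fintype.card Fq : ℝ) ^ G.natDegree := by
        rw [sum_image fun _ _ _ _ h => mul_left_cancel₀ hG.ne_zero h, sum_div]
        refine sum_congr rfl fun Q hQ => ?_
        rw [hG.natDegree_mul (mem_monicOfDegreeLE.1 hQ).1, pow_add, mul_inv, div_eq_mul_inv,
          mul_comm]
    _ ≤ _ := by gcongr; exact sum_monicOfDegreeLE_inv_pow_natDegree_le n

/-- Group the pairs `(A, B)` by `G = gcd A B` and drop the coprimality of `A / G` and `B / G`. -/
theorem sum_filter_gcd_dvd_le (K : Fq[X]) (n : ℕ) :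
    ∑ AB ∈ monicOfDegreeLE Fq n ×ˢ monicOfDegreeLE Fq n with gcd AB.1 AB.2 ∣ K,
        (Fintype.card Fq : ℝ) ^ (gcd AB.1 AB.2).natDegree /
          ((Fintype.card Fq : ℝ) ^ AB.1.natDegree * (Fintype.card Fq : ℝ) ^ AB.2.natDegree) ≤
      (n + 1) ^ 2 * ∑ G ∈ monicOfDegreeLE Fq n with G ∣ K,
        ((Fintype.card Fq : ℝ) ^ G.natDegree)⁻¹ := by
  set U := monicOfDegreeLE Fq n
  set q : ℝ := (Fintype.card Fq : ℝ)
  have hmaps : ∀ AB ∈ {AB ∈ U ×ˢ U | gcd AB.1 AB.2 ∣ K}, gcd AB.1 AB.2 ∈ {G ∈ U | G ∣ K} := by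
    intro AB hAB
    obtain ⟨hAB, hK⟩ := mem_filter.1 hAB
    obtain ⟨⟨hAm, hAn⟩, -⟩ := (mem_product.1 hAB).imp mem_monicOfDegreeLE.1 mem_monicOfDegreeLE.1
    refine mem_filter.2 ⟨mem_monicOfDegreeLE.2 ⟨?_, ?_⟩, hK⟩
    · simpa using monic_normalize (gcd_ne_zero_of_left (b := AB.2) hAm.ne_zero)
    · exact (natDegree_le_of_dvd (gcd_dvd_left _ _) hAm.ne_zero).trans hAn
  rw [← sum_fiberwise_of_maps_to hmaps, mul_sum]
  refine sum_le_sum fun G hG => ?_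
  have hGm : G.Monic := (mem_monicOfDegreeLE.1 (mem_filter.1 hG).1).1
  have hfiber : {AB ∈ {AB ∈ U ×ˢ U | gcd AB.1 AB.2 ∣ K} | gcd AB.1 AB.2 = G} ⊆
      {AB ∈ U ×ˢ U | G ∣ AB.1 ∧ G ∣ AB.2} :=
    fun AB hAB => by
      simp only [mem_filter] at hAB ⊢
      obtain ⟨⟨hAB, -⟩, rfl⟩ := hAB
      exact ⟨hAB, gcd_dvd_left _ _, gcd_dvd_right _ _⟩
  calc _ = ∑ AB ∈ {AB ∈ {AB ∈ U ×ˢ U | gcd AB.1 AB.2 ∣ K} | gcd AB.1 AB.2 = G},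
        q ^ G.natDegree / (q ^ AB.1.natDegree * q ^ AB.2.natDegree) :=
        sum_congr rfl fun AB hAB => by rw [(mem_filter.1 hAB).2]
    _ ≤ ∑ AB ∈ {AB ∈ U ×ˢ U | G ∣ AB.1 ∧ G ∣ AB.2},
        q ^ G.natDegree / (q ^ AB.1.natDegree * q ^ AB.2.natDegree) :=
        sum_le_sum_of_subset_of_nonneg hfiber fun _ _ _ => by positivity
    _ = q ^ G.natDegree * (∑ A ∈ U with G ∣ A, (q ^ A.natDegree)⁻¹) ^ 2 := by
        rw [filter_product, sum_product, sq, sum_mul_sum, mul_sum]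
        refine sum_congr rfl fun A _ => ?_
        rw [mul_sum]
        refine sum_congr rfl fun B _ => ?_
        rw [div_eq_mul_inv, mul_inv]
    _ ≤ q ^ G.natDegree * ((n + 1) / q ^ G.natDegree) ^ 2 := by
        gcongr
        exact sum_filter_dvd_inv_pow_natDegree_le hGm n
    _ = (n + 1) ^ 2 * (q ^ G.natDegree)⁻¹ := by
        have : q ^ G.natDegree ≠ 0 := by positivity
        field_simp

theorem sum_ffD_mul_ffD_add_le_four_mul_sum_card {x : ℕ} (S : Finset Fq[X])
    (hS : ∀ N ∈ S, IsMonicOfDegree N x) {M : Fq[X]} (hM : M.natDegree < x) :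
    ∑ N ∈ S, ffD N * ffD (M + N) ≤
      4 * ∑ AB ∈ monicOfDegreeLE Fq (x / 2) ×ˢ monicOfDegreeLE Fq (x / 2),
        #{N ∈ S | AB.1 ∣ N ∧ AB.2 ∣ M + N} := by
  rw [← sum_card_filter_mul_card_filter S _ _ (fun A N => A ∣ N) (fun B N => B ∣ M + N), mul_sum]
  refine sum_le_sum fun N hN => ?_
  have hNx := hS N hN
  have hMNx := hNx.add_left hM
  calc ffD N * ffD (M + N)
      ≤ (2 * #{A ∈ monicOfDegreeLE Fq (x / 2) | A ∣ N}) *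
          (2 * #{B ∈ monicOfDegreeLE Fq (x / 2) | B ∣ M + N}) := by
        have hN := ffD_le_two_mul_card_filter_dvd hNx.monic
        have hMN := ffD_le_two_mul_card_filter_dvd hMNx.monic
        rw [hNx.natDegree_eq] at hN
        rw [hMNx.natDegree_eq] at hMN
        exact Nat.mul_le_mul hN hMN
    _ = _ := by ring

theorem sum_ffD_mul_ffD_mul_add_le {F K : Fq[X]} {x : ℕ} (hx : (K * F).natDegree < x) :
    ∑ N ∈ monicOfDegree Fq x with IsCoprime N F, (ffD N : ℝ) * ffD (K * F + N) ≤
      4 * (Fintype.card Fq : ℝ) ^ x * x ^ 2 *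
        ∑ H ∈ monicOfDegreeLE Fq (x / 2) with H ∣ K,
          (ffD H : ℝ) / (Fintype.card Fq : ℝ) ^ H.natDegree := by
  set U := monicOfDegreeLE Fq (x / 2)
  set S := {N ∈ monicOfDegree Fq x | IsCoprime N F}
  set q : ℝ := (Fintype.card Fq : ℝ)
  have hS : ∀ N ∈ S, IsMonicOfDegree N x := fun N hN =>
    mem_monicOfDegree.1 (mem_filter.1 hN).1
  have hcount : ∀ AB ∈ U ×ˢ U, (#{N ∈ S | AB.1 ∣ N ∧ AB.2 ∣ K * F + N} : ℝ) ≤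
      q ^ x * (q ^ (gcd AB.1 AB.2).natDegree / (q ^ AB.1.natDegree * q ^ AB.2.natDegree)) := by
    intro AB hAB
    obtain ⟨⟨hAm, hAn⟩, hBm, hBn⟩ :=
      (mem_product.1 hAB).imp mem_monicOfDegreeLE.1 mem_monicOfDegreeLE.1
    refine le_trans ?_ (card_filter_dvd_and_dvd_add_le hAm hBm (by omega) (K * F))
    exact_mod_cast card_le_card (filter_subset_filter _ (filter_subset _ _))
  have hgcd : ∀ AB ∈ U ×ˢ U, (#{N ∈ S | AB.1 ∣ N ∧ AB.2 ∣ K * F + N} : ℝ) ≠ 0 →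
      gcd AB.1 AB.2 ∣ K := by
    intro AB _ hne
    obtain ⟨N, hN⟩ := card_ne_zero.1 (Nat.cast_ne_zero.1 hne)
    obtain ⟨hNS, hAN, hBN⟩ := mem_filter.1 hN
    exact (mem_filter.1 hNS).2.dvd_of_dvd_of_dvd_mul_add ((gcd_dvd_left _ _).trans hAN)
      ((gcd_dvd_right _ _).trans hBN)
  have hx2 : ((x / 2 : ℕ) : ℝ) + 1 ≤ x := by exact_mod_cast (by omega : x / 2 + 1 ≤ x)
  calc ∑ N ∈ S, (ffD N : ℝ) * ffD (K * F + N)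
      ≤ 4 * ∑ AB ∈ U ×ˢ U, (#{N ∈ S | AB.1 ∣ N ∧ AB.2 ∣ K * F + N} : ℝ) := by
        exact_mod_cast sum_ffD_mul_ffD_add_le_four_mul_sum_card S hS hx
    _ = 4 * ∑ AB ∈ U ×ˢ U with gcd AB.1 AB.2 ∣ K,
          (#{N ∈ S | AB.1 ∣ N ∧ AB.2 ∣ K * F + N} : ℝ) := by
        rw [sum_filter_of_ne hgcd]
    _ ≤ 4 * ∑ AB ∈ U ×ˢ U with gcd AB.1 AB.2 ∣ K,
          q ^ x * (q ^ (gcd AB.1 AB.2).natDegree / (q ^ AB.1.natDegree * q ^ AB.2.natDegree)) := by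
        gcongr with AB hAB
        exact hcount AB (mem_filter.1 hAB).1
    _ ≤ 4 * q ^ x * ((((x / 2 : ℕ) : ℝ) + 1) ^ 2 *
          ∑ G ∈ U with G ∣ K, (q ^ G.natDegree)⁻¹) := by
        rw [← mul_sum, ← mul_assoc]
        gcongr
        exact sum_filter_gcd_dvd_le K (x / 2)
    _ ≤ 4 * q ^ x * (x ^ 2 * ∑ H ∈ U with H ∣ K, (ffD H : ℝ) / q ^ H.natDegree) := by
        gcongr with H hH
        rw [inv_eq_one_div]
        gcongr
        exact_mod_cast one_le_ffD (mem_monicOfDegreeLE.1 (mem_filter.1 hH).1).1.ne_zero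
    _ = _ := by ring

end FiniteField

end Polynomial

/-- For monic `F, K` and `deg(KF) < x`,
`∑_{N monic, deg N = x, (N,F)=1} d(N)·d(KF+N) ≪ q^x·x²·∑_{H∣K, deg H ≤ x/2} d(H)/|H|`
with an absolute implied constant. -/
theorem double_divisor_sum_bound :
    ∃ C : ℝ, 0 < C ∧ ∀ (Fq : Type) [Field Fq] [Fintype Fq] (F K : Polynomial Fq),
      F.Monic → K.Monic → ∀ x : ℕ, (K * F).natDegree < x →
      ∑ᶠ (N : Polynomial Fq) (_ : N.Monic ∧ N.natDegree = x ∧ IsCoprime N F),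
          (ffD N : ℝ) * (ffD (K * F + N) : ℝ)
        ≤ C * (Fintype.card Fq : ℝ) ^ x * (x : ℝ) ^ 2 *
            ∑ᶠ (H : Polynomial Fq) (_ : H.Monic ∧ H ∣ K ∧ 2 * H.natDegree ≤ x),
              (ffD H : ℝ) / (Fintype.card Fq : ℝ) ^ H.natDegree := by
  refine ⟨4, four_pos, fun Fq _ _ F K _ _ x hx => ?_⟩
  rw [finsum_cond_eq_sum_of_cond_iff _ (t := {N ∈ monicOfDegree Fq x | IsCoprime N F})
      fun _ => by simp only [mem_filter, mem_monicOfDegree, isMonicOfDegree_iff']; tauto,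
    finsum_cond_eq_sum_of_cond_iff _ (t := {H ∈ monicOfDegreeLE Fq (x / 2) | H ∣ K})
      fun _ => by
        simp only [mem_filter, mem_monicOfDegreeLE, Nat.le_div_iff_mul_le two_pos, mul_comm]
        tauto]
  exact sum_ffD_mul_ffD_mul_add_le hx
end
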